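/- arXiv:2305.10073 — 9 statements merged into one kernel-verified Lean document; each statement's English description precedes it below -/
import Mathlib

section
/- Suppose f : {-1,1}^n → {-1,1} satisfies f(x) = A·∏_{i=1}^n (x_i + κ_i) − B for real constants A ≠ 0, B, κ_1,…,κ_n, with n ≥ 2. Then either (1) κ_1 = ⋯ = κ_n = B = 0 and A ∈ {-1,1}, so f(x) = A·∏_i x_i; or (2) κ_1,…,κ_n, B ∈ {-1,1} and A = 2B / ∏_{i=1}^n (2κ_i), so f(x) = 2B·∏_{i=1}^n ((κ_i x_i + 1)/2) − B. -/
open Finset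

private lemma quad_aux (c p q B : ℝ) (hc : c ≠ 0) (hp1 : p ≠ 1) (hp2 : p ≠ -1)
    (hq1 : q ≠ 1) (hq2 : q ≠ -1)
    (h11 : c*(1+p)*(1+q) = 1+B ∨ c*(1+p)*(1+q) = -1+B)
    (h12 : c*(1+p)*(-1+q) = 1+B ∨ c*(1+p)*(-1+q) = -1+B)
    (h21 : c*(-1+p)*(1+q) = 1+B ∨ c*(-1+p)*(1+q) = -1+B)
    (h22 : c*(-1+p)*(-1+q) = 1+B ∨ c*(-1+p)*(-1+q) = -1+B) :
    p = 0 ∧ q = 0 := by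
  have hp1' : (1:ℝ) + p ≠ 0 := fun h => hp2 (by linarith)
  have hq1' : (1:ℝ) + q ≠ 0 := fun h => hq2 (by linarith)
  have hq2' : (-1:ℝ) + q ≠ 0 := fun h => hq1 (by linarith)
  have hne12 : c*(1+p)*(1+q) ≠ c*(1+p)*(-1+q) := by
    intro h
    have := mul_left_cancel₀ (mul_ne_zero hc hp1') h
    linarith
  have hne13 : c*(1+p)*(1+q) ≠ c*(-1+p)*(1+q) := by
    intro h
    have h2 := mul_right_cancel₀ hq1' h
    have := mul_left_cancel₀ hc h2
    linarith
  have hne24 : c*(1+p)*(-1+q) ≠ c*(-1+p)*(-1+q) := by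
    intro h
    have h2 := mul_right_cancel₀ hq2' h
    have := mul_left_cancel₀ hc h2
    linarith
  rcases h11 with h11|h11 <;> rcases h12 with h12|h12 <;>
    rcases h21 with h21|h21 <;> rcases h22 with h22|h22 <;>
    first
      | exact absurd (h11.trans h12.symm) hne12
      | exact absurd (h11.trans h21.symm) hne13
      | exact absurd (h12.trans h22.symm) hne24
      | · have e1 := h21.trans h12.symm
          have e2 := h22.trans h11.symm
          have f1 : (-1+p)*(1+q) = (1+p)*(-1+q) :=
            mul_left_cancel₀ hc (by linear_combination e1)
          have f2 : (-1+p)*(-1+q) = (1+p)*(1+q) :=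
            mul_left_cancel₀ hc (by linear_combination e2)
          exact ⟨by linear_combination f1/4 - f2/4, by linear_combination -f1/4 - f2/4⟩

private lemma prod_split {n : ℕ} (i j : Fin n) (hij : i ≠ j) (g : Fin n → ℝ) :
    ∏ m, g m = g i * (g j * ∏ m ∈ (univ.erase i).erase j, g m) := by
  rw [← Finset.mul_prod_erase univ g (mem_univ i),
      ← Finset.mul_prod_erase (univ.erase i) g
        (Finset.mem_erase.2 ⟨hij.symm, mem_univ j⟩)]

/-- Classification of Boolean functions of the form
`f(x) = A·∏ᵢ (xᵢ + κᵢ) − B` with `A ≠ 0` and `n ≥ 2`: either `f` is a (negated) XOR,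
or an AND/OR of literals. -/
theorem stmt_4 (n : ℕ) (hn : 2 ≤ n) (f : (Fin n → ℝ) → ℝ)
    (A B : ℝ) (κ : Fin n → ℝ) (hA : A ≠ 0)
    (hBool : ∀ x : Fin n → ℝ, (∀ i, x i = 1 ∨ x i = -1) → (f x = 1 ∨ f x = -1))
    (hf : ∀ x : Fin n → ℝ, (∀ i, x i = 1 ∨ x i = -1) →
      f x = A * ∏ i, (x i + κ i) - B) :
    ((∀ i, κ i = 0) ∧ B = 0 ∧ (A = 1 ∨ A = -1) ∧
      ∀ x : Fin n → ℝ, (∀ i, x i = 1 ∨ x i = -1) → f x = A * ∏ i, x i) ∨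
    ((∀ i, κ i = 1 ∨ κ i = -1) ∧ (B = 1 ∨ B = -1) ∧ A = 2 * B / ∏ i, (2 * κ i) ∧
      ∀ x : Fin n → ℝ, (∀ i, x i = 1 ∨ x i = -1) →
        f x = 2 * B * (∏ i, ((κ i * x i + 1) / 2)) - B) := by
  by_cases hex : ∃ i, κ i = 1 ∨ κ i = -1
  · -- Case 2: some κ is ±1
    obtain ⟨j, hj⟩ := hex
    -- B is ±1
    have hB : B = 1 ∨ B = -1 := by
      set x0 : Fin n → ℝ := fun m => if m = j then -κ j else 1 with hx0
      have hx0b : ∀ m, x0 m = 1 ∨ x0 m = -1 := by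
        intro m
        simp only [hx0]
        split_ifs
        · rcases hj with h|h <;> rw [h] <;> [right; left] <;> norm_num
        · left; rfl
      have hprod0 : ∏ m, (x0 m + κ m) = 0 := by
        apply Finset.prod_eq_zero (mem_univ j)
        simp [hx0]
      have hfx0 := hf x0 hx0b
      rw [hprod0] at hfx0
      rcases hBool x0 hx0b with h|h <;> [right; left] <;> rw [h] at hfx0 <;> linarith
    -- all κ are ±1
    have hκall : ∀ k, κ k = 1 ∨ κ k = -1 := by
      intro k
      by_contra hk
      set y : Fin n → ℝ := fun m => if κ m = -1 then -1 else 1 with hy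
      set R := ∏ m ∈ univ.erase k, (y m + κ m) with hR_def
      have hR : R ≠ 0 := by
        rw [hR_def]
        rw [Finset.prod_ne_zero_iff]
        intro m _
        by_cases hm : κ m = -1
        · simp [hy, hm]
        · simp only [hy, if_neg hm]
          intro h; exact hm (by linarith)
      have key2 : ∀ u : ℝ, (u = 1 ∨ u = -1) →
          A * ((u + κ k) * R) - B = 1 ∨ A * ((u + κ k) * R) - B = -1 := by
        intro u hu
        set x : Fin n → ℝ := fun m => if m = k then u else y m with hx
        have hxb : ∀ m, x m = 1 ∨ x m = -1 := by
          intro m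
          simp only [hx, hy]
          split_ifs
          · exact hu
          · right; rfl
          · left; rfl
        have hprod : ∏ m, (x m + κ m) = (u + κ k) * R := by
          rw [← Finset.mul_prod_erase univ (fun m => x m + κ m) (mem_univ k)]
          congr 1
          · simp [hx]
          · rw [hR_def]
            apply Finset.prod_congr rfl
            intro m hm
            have hmk : m ≠ k := (Finset.mem_erase.1 hm).1
            simp [hx, hmk]
        have hfx := hf x hxb
        rw [hprod] at hfx
        rcases hBool x hxb with h|h <;> [left; right] <;> linarith
      have h1κ : (1:ℝ) + κ k ≠ 0 := fun h => hk (Or.inr (by linarith))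
      have h2κ : (-1:ℝ) + κ k ≠ 0 := fun h => hk (Or.inl (by linarith))
      have hval : ∀ u : ℝ, u + κ k ≠ 0 →
          (A * ((u + κ k) * R) - B = 1 ∨ A * ((u + κ k) * R) - B = -1) →
          A * ((u + κ k) * R) = 2 * B := by
        intro u hu h
        rcases hB with hB|hB <;> rcases h with h|h <;>
          first
            | linarith
            | (exfalso;
               exact (mul_ne_zero hA (mul_ne_zero hu hR))
                 (by linarith : A * ((u + κ k) * R) = 0))
      have e1 := hval 1 h1κ (key2 1 (Or.inl rfl))
      have e2 := hval (-1) h2κ (key2 (-1) (Or.inr rfl))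
      have e : (A*R) * (1 + κ k) = (A*R) * (-1 + κ k) := by linear_combination e1 - e2
      have := mul_left_cancel₀ (mul_ne_zero hA hR) e
      linarith
    -- the value of A
    have hP : ∏ i, (2 * κ i) ≠ 0 := by
      rw [Finset.prod_ne_zero_iff]
      intro i _
      rcases hκall i with h|h <;> rw [h] <;> norm_num
    have hAP : A * ∏ i, (2 * κ i) = 2 * B := by
      have hfκ := hf κ hκall
      have hpp : ∏ i, (κ i + κ i) = ∏ i, (2 * κ i) :=
        Finset.prod_congr rfl (fun i _ => by ring)
      rw [hpp] at hfκ
      rcases hB with hB|hB <;> rcases hBool κ hκall with h|h <;>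
        first
          | linarith
          | (exfalso; exact hA (by
              have h0 : A * ∏ i, (2 * κ i) = 0 := by linarith
              exact (mul_eq_zero.1 h0).resolve_right hP))
    refine Or.inr ⟨hκall, hB, ?_, ?_⟩
    · rw [eq_div_iff hP]; exact hAP
    · intro x hx
      rw [hf x hx]
      have hQ : (∏ i, (2 * κ i)) * ∏ i, ((κ i * x i + 1) / 2) = ∏ i, (x i + κ i) := by
        rw [← Finset.prod_mul_distrib]
        exact Finset.prod_congr rfl fun i _ => by
          rcases hκall i with h|h <;> rw [h] <;> ring
      linear_combination (-A) * hQ + (∏ i, ((κ i * x i + 1) / 2)) * hAP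
  · -- Case 1: no κ is ±1, show all are 0
    push_neg at hex
    have pairzero : ∀ i j : Fin n, i ≠ j → κ i = 0 ∧ κ j = 0 := by
      intro i j hij
      set R := ∏ m ∈ (univ.erase i).erase j, (1 + κ m) with hR_def
      have hR : R ≠ 0 := by
        rw [hR_def, Finset.prod_ne_zero_iff]
        intro m _
        intro h
        exact (hex m).2 (by linarith)
      have key : ∀ u v : ℝ, (u = 1 ∨ u = -1) → (v = 1 ∨ v = -1) →
          A * R * (u + κ i) * (v + κ j) = 1 + B ∨
          A * R * (u + κ i) * (v + κ j) = -1 + B := by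
        intro u v hu hv
        set x : Fin n → ℝ := fun m => if m = i then u else if m = j then v else 1 with hx
        have hxb : ∀ m, x m = 1 ∨ x m = -1 := by
          intro m
          simp only [hx]
          split_ifs
          · exact hu
          · exact hv
          · left; rfl
        have hprod : ∏ m, (x m + κ m) = (u + κ i) * ((v + κ j) * R) := by
          rw [prod_split i j hij]
          have h1 : x i = u := by simp [hx]
          have h2 : x j = v := by simp [hx, hij.symm]
          have h3 : ∏ m ∈ (univ.erase i).erase j, (x m + κ m) = R := by
            rw [hR_def]
            apply Finset.prod_congr rfl
            intro m hm
            have hmj : m ≠ j := (Finset.mem_erase.1 hm).1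
            have hmi : m ≠ i := (Finset.mem_erase.1 ((Finset.mem_erase.1 hm).2)).1
            simp [hx, hmi, hmj]
          rw [h1, h2, h3]
        have hfx := hf x hxb
        rw [hprod] at hfx
        rcases hBool x hxb with h|h <;> [left; right] <;> linarith
      exact quad_aux (A*R) (κ i) (κ j) B (mul_ne_zero hA hR)
        (hex i).1 (hex i).2 (hex j).1 (hex j).2
        (key 1 1 (Or.inl rfl) (Or.inl rfl))
        (key 1 (-1) (Or.inl rfl) (Or.inr rfl))
        (key (-1) 1 (Or.inr rfl) (Or.inl rfl))
        (key (-1) (-1) (Or.inr rfl) (Or.inr rfl))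
    have hz : ∀ k, κ k = 0 := by
      intro k
      by_cases hk : k = (⟨0, by omega⟩ : Fin n)
      · refine (pairzero k ⟨1, by omega⟩ ?_).1
        rw [hk]
        intro h
        have := congrArg Fin.val h
        simp at this
      · exact (pairzero k ⟨0, by omega⟩ hk).1
    -- evaluate at all-ones and at one flip
    have hone : ∀ m : Fin n, ((1:ℝ) = 1 ∨ (1:ℝ) = -1) := fun _ => Or.inl rfl
    have hv1 : A - B = 1 ∨ A - B = -1 := by
      have hfx := hf (fun _ => 1) hone
      have hp : ∏ i : Fin n, ((1:ℝ) + κ i) = 1 := by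
        apply Finset.prod_eq_one
        intro i _
        rw [hz i]; norm_num
      rw [hp] at hfx
      rcases hBool (fun _ => 1) hone with h|h <;> [left; right] <;> linarith
    have hv2 : -A - B = 1 ∨ -A - B = -1 := by
      set x : Fin n → ℝ := fun m => if m = (⟨0, by omega⟩ : Fin n) then -1 else 1 with hx
      have hxb : ∀ m, x m = 1 ∨ x m = -1 := by
        intro m; simp only [hx]; split_ifs
        · right; rfl
        · left; rfl
      have hp : ∏ m, (x m + κ m) = -1 := by
        rw [← Finset.mul_prod_erase univ (fun m => x m + κ m)
          (mem_univ (⟨0, by omega⟩ : Fin n))]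
        have h1 : x (⟨0, by omega⟩ : Fin n) + κ (⟨0, by omega⟩ : Fin n) = -1 := by
          rw [hz]; simp [hx]
        rw [h1]
        have h2 : ∏ m ∈ univ.erase (⟨0, by omega⟩ : Fin n), (x m + κ m) = 1 := by
          apply Finset.prod_eq_one
          intro m hm
          have hmk : m ≠ (⟨0, by omega⟩ : Fin n) := (Finset.mem_erase.1 hm).1
          rw [hz]; simp [hx, hmk]
        rw [h2]; ring
      have hfx := hf x hxb
      rw [hp] at hfx
      rcases hBool x hxb with h|h <;> [left; right] <;> linarith
    have hBA : B = 0 ∧ (A = 1 ∨ A = -1) := by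
      rcases hv1 with h|h <;> rcases hv2 with h'|h'
      · exact absurd (by linarith : A = 0) hA
      · exact ⟨by linarith, Or.inl (by linarith)⟩
      · exact ⟨by linarith, Or.inr (by linarith)⟩
      · exact absurd (by linarith : A = 0) hA
    refine Or.inl ⟨hz, hBA.1, hBA.2, ?_⟩
    intro x hx
    rw [hf x hx, hBA.1, sub_zero]
    congr 1
    apply Finset.prod_congr rfl
    intro m _
    rw [hz m, add_zero]
end

section
/- Let n ≥ 1, 1 ≤ k ≤ n, and suppose f : {-1,1}^n → {-1,1} satisfies f(x,y) = φ(y)·∏_{i=1}^k (x_i + κ_i) − B for all (x,y) ∈ {-1,1}^k × {-1,1}^{n−k}, where φ : {-1,1}^{n−k} → ℝ and B, κ_1,…,κ_k ∈ ℝ. Assume either φ is not identically zero and k ≥ 2, or φ is nonconstant and k ≥ 1. Then one of the following holds: (1) κ_1 = ⋯ = κ_k = B = 0 and φ takes values in {-1,1}, so f(x,y) = φ(y)·∏_{i=1}^k x_i; or (2) κ_1,…,κ_k, B ∈ {-1,1} and there exists φ̃ : {-1,1}^{n−k} → {0,1} such that f(x,y) = φ̃(y)·2B·∏_{i=1}^k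 ((κ_i x_i + 1)/2) − B. -/
/-!
Write `g(x) = ∏ᵢ (xᵢ + κᵢ)`, so that `c · g(x) - B = ±1` on the cube for every value `c = φ(y)`.
Flipping one coordinate `xⱼ` of a sign vector changes `c · g(x)` from `(xⱼ + κⱼ) q` to
`(-xⱼ + κⱼ) q`; if `q ≠ 0` the two values are the two distinct elements of `{B - 1, B + 1}`,
so their sum gives `κⱼ q = B` and their difference gives `q² = 1`. Choosing `x` with all factors
nonzero yields `κⱼ² = B²` for every `j`. If `B = 0` all `κⱼ` vanish. Otherwise, if `B² ≠ 1`,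
no factor ever vanishes, and `κ_b q_b = B` forces `q_b` to be independent of `x_a` for `a ≠ b`
(impossible when `k ≥ 2`), while two distinct values `c ≠ c'` force `(c + c') g(x) = 2B`, so `g`
would be constant (impossible when `k ≥ 1`). Hence `B, κⱼ = ±1`, and then
`xᵢ + κᵢ = 2κᵢ · (κᵢxᵢ + 1)/2` gives the second normal form.
-/

open Finset Function

def IsSign (t : ℝ) : Prop := t = 1 ∨ t = -1

def IsSignVec {ι : Type*} (x : ι → ℝ) : Prop := ∀ i, IsSign (x i)

def IsBooleanProd {ι : Type*} [Fintype ι] (κ : ι → ℝ) (B c : ℝ) : Prop :=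
  ∀ x : ι → ℝ, IsSignVec x → IsSign (c * ∏ i, (x i + κ i) - B)

namespace IsSign

variable {t : ℝ}

lemma sq_eq_one (ht : IsSign t) : t ^ 2 = 1 := sq_eq_one_iff.2 ht

lemma ne_zero (ht : IsSign t) : t ≠ 0 := by
  rcases ht with rfl | rfl <;> norm_num

lemma add_ne_zero (ht : IsSign t) {s : ℝ} (hs : s ^ 2 ≠ 1) : t + s ≠ 0 := fun h =>
  hs (by rw [eq_neg_of_add_eq_zero_right h, neg_sq, ht.sq_eq_one])

lemma neg (ht : IsSign t) : IsSign (-t) := by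
  rcases ht with rfl | rfl <;> norm_num [IsSign]

lemma add_eq_and_sub_sq {B u v : ℝ} (hu : IsSign (u - B)) (hv : IsSign (v - B)) (huv : u ≠ v) :
    u + v = 2 * B ∧ (u - v) ^ 2 = 4 := by
  rcases hu with hu | hu <;> rcases hv with hv | hv
  all_goals first
    | exact absurd (by linarith) huv
    | constructor <;> nlinarith

lemma div_two_mul_eq_zero_or_one {B d : ℝ} (hB : IsSign B) (hd : IsSign (d - B)) :
    d / (2 * B) = 0 ∨ d / (2 * B) = 1 := by
  rcases hB with rfl | rfl <;> rcases hd with h | h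
  all_goals
    first
    | (left; rw [div_eq_zero_iff]; left; linarith)
    | (right; rw [div_eq_one_iff_eq (by norm_num)]; linarith)

end IsSign

section

variable {ι : Type*} {κ x : ι → ℝ} {B c : ℝ}

lemma isSignVec_one : IsSignVec (fun _ : ι => (1 : ℝ)) := fun _ => Or.inl rfl

lemma exists_isSignVec_add_ne_zero (κ : ι → ℝ) : ∃ x, IsSignVec x ∧ ∀ i, x i + κ i ≠ 0 := by
  refine ⟨fun i => if κ i = -1 then -1 else 1, fun i => ?_, fun i => ?_⟩ <;> dsimp only
  · split_ifs <;> simp [IsSign]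
  · split_ifs with h
    · rw [h]; norm_num
    · intro h'; exact h (by linarith)

lemma prod_add_eq_of_isSignVec [Fintype ι] (hκ : IsSignVec κ) (x : ι → ℝ) :
    ∏ i, (x i + κ i) = (∏ i, κ i) * 2 ^ Fintype.card ι * ∏ i, ((κ i * x i + 1) / 2) := by
  have hfactor : ∀ i, x i + κ i = κ i * 2 * ((κ i * x i + 1) / 2) := fun i => by
    linear_combination (-x i) * (hκ i).sq_eq_one
  simp_rw [hfactor, prod_mul_distrib, prod_const, card_univ]

variable [DecidableEq ι]

lemma IsSignVec.update_neg (hx : IsSignVec x) (a : ι) : IsSignVec (update x a (-x a)) := by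
  intro i
  rcases eq_or_ne i a with rfl | h
  · simpa using (hx i).neg
  · simpa [update_of_ne h] using hx i

lemma prod_update_add {s : Finset ι} {a : ι} (ha : a ∈ s) (x κ : ι → ℝ) (v : ℝ) :
    ∏ i ∈ s, (update x a v i + κ i) = (v + κ a) * ∏ i ∈ s.erase a, (x i + κ i) := by
  rw [← mul_prod_erase s _ ha, update_self]
  congr 1
  exact prod_congr rfl fun i hi => by rw [update_of_ne (ne_of_mem_erase hi)]

lemma prod_update_neg_ne {s : Finset ι} {a : ι} (ha : a ∈ s) (hxa : x a ≠ 0)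
    (hs : ∀ i ∈ s, x i + κ i ≠ 0) :
    ∏ i ∈ s, (update x a (-x a) i + κ i) ≠ ∏ i ∈ s, (x i + κ i) := by
  rw [prod_update_add ha, ← mul_prod_erase s _ ha]
  intro h
  have := mul_right_cancel₀ (prod_ne_zero_iff.2 fun i hi => hs i (mem_of_mem_erase hi)) h
  exact hxa (by linarith)

variable [Fintype ι]

namespace IsBooleanProd

lemma flip_coord (h : IsBooleanProd κ B c) (hx : IsSignVec x) (j : ι)
    (hq : c * ∏ i ∈ univ.erase j, (x i + κ i) ≠ 0) :
    κ j * (c * ∏ i ∈ univ.erase j, (x i + κ i)) = B ∧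
      (c * ∏ i ∈ univ.erase j, (x i + κ i)) ^ 2 = 1 := by
  set q := c * ∏ i ∈ univ.erase j, (x i + κ i)
  have hu : IsSign ((x j + κ j) * q - B) := by
    have := h x hx
    rwa [← mul_prod_erase univ _ (mem_univ j), mul_left_comm] at this
  have hv : IsSign ((-x j + κ j) * q - B) := by
    have := h _ (hx.update_neg j)
    rwa [prod_update_add (mem_univ j), mul_left_comm] at this
  have huv : (x j + κ j) * q ≠ (-x j + κ j) * q := fun e =>
    mul_ne_zero (mul_ne_zero two_ne_zero (hx j).ne_zero) hq (by linear_combination e)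
  obtain ⟨hsum, hdiff⟩ := IsSign.add_eq_and_sub_sq hu hv huv
  refine ⟨by linear_combination hsum / 2, ?_⟩
  linear_combination (hdiff - 4 * q ^ 2 * ((hx j).sq_eq_one)) / 4

lemma sq_eq_sq (h : IsBooleanProd κ B c) (hc : c ≠ 0) (j : ι) : κ j ^ 2 = B ^ 2 := by
  obtain ⟨x, hx, hx0⟩ := exists_isSignVec_add_ne_zero κ
  obtain ⟨hκq, hq⟩ := h.flip_coord hx j (mul_ne_zero hc (prod_ne_zero_iff.2 fun i _ => hx0 i))
  rw [← hκq, mul_pow, hq, mul_one]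

lemma subsingleton (h : IsBooleanProd κ B c) (hc : c ≠ 0) (hκ : ∀ i, κ i ^ 2 ≠ 1)
    (hB : B ≠ 0) : Subsingleton ι := by
  refine ⟨fun a b => by_contra fun hab => ?_⟩
  have hq : ∀ z, IsSignVec z → c * ∏ i ∈ univ.erase b, (z i + κ i) ≠ 0 := fun z hz =>
    mul_ne_zero hc (prod_ne_zero_iff.2 fun i _ => (hz i).add_ne_zero (hκ i))
  have e := (h.flip_coord isSignVec_one b (hq _ isSignVec_one)).1
  have e' := (h.flip_coord (isSignVec_one.update_neg a) b (hq _ (isSignVec_one.update_neg a))).1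
  have hκb : κ b ≠ 0 := by
    rintro h0
    rw [h0, zero_mul] at e
    exact hB e.symm
  exact prod_update_neg_ne (mem_erase.2 ⟨hab, mem_univ a⟩) one_ne_zero
    (fun i _ => isSignVec_one i |>.add_ne_zero (hκ i))
    (mul_left_cancel₀ hc (mul_left_cancel₀ hκb (e'.trans e.symm)))

lemma isEmpty (h : IsBooleanProd κ B c) {c' : ℝ} (h' : IsBooleanProd κ B c') (hne : c ≠ c')
    (hκ : ∀ i, κ i ^ 2 ≠ 1) (hB : B ≠ 0) : IsEmpty ι := by
  refine ⟨fun a => ?_⟩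
  have hsum : ∀ z, IsSignVec z → (c + c') * ∏ i, (z i + κ i) = 2 * B := fun z hz => by
    have hg : ∏ i, (z i + κ i) ≠ 0 := prod_ne_zero_iff.2 fun i _ => (hz i).add_ne_zero (hκ i)
    linear_combination
      (IsSign.add_eq_and_sub_sq (h z hz) (h' z hz) fun e => hne (mul_right_cancel₀ hg e)).1
  have e := hsum _ isSignVec_one
  have e' := hsum _ (isSignVec_one.update_neg a)
  have hcc : c + c' ≠ 0 := by
    rintro h0
    rw [h0, zero_mul] at e
    exact hB (by linarith)
  exact prod_update_neg_ne (mem_univ a) one_ne_zero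
    (fun i _ => isSignVec_one i |>.add_ne_zero (hκ i)) (mul_left_cancel₀ hcc (e'.trans e.symm))

end IsBooleanProd

end

lemma IsBooleanProd.div_two_mul_eq_zero_or_one {ι : Type*} [Fintype ι] {κ : ι → ℝ} {B c : ℝ}
    (h : IsBooleanProd κ B c) (hκ : IsSignVec κ) (hB : IsSign B) :
    c * (∏ i, κ i) * 2 ^ Fintype.card ι / (2 * B) = 0 ∨
      c * (∏ i, κ i) * 2 ^ Fintype.card ι / (2 * B) = 1 := by
  have hprod : ∏ i, ((κ i * κ i + 1) / 2) = 1 :=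
    prod_eq_one fun i _ => by rw [← sq, (hκ i).sq_eq_one]; norm_num
  have := h κ hκ
  rw [prod_add_eq_of_isSignVec hκ, hprod, mul_one, ← mul_assoc] at this
  exact hB.div_two_mul_eq_zero_or_one this

theorem stmt_5_general (n k : ℕ)
    (f : (Fin k → ℝ) → (Fin (n - k) → ℝ) → ℝ)
    (φ : (Fin (n - k) → ℝ) → ℝ) (B : ℝ) (κ : Fin k → ℝ)
    (hBool : ∀ (x : Fin k → ℝ) (y : Fin (n - k) → ℝ),
      (∀ i, x i = 1 ∨ x i = -1) → (∀ j, y j = 1 ∨ y j = -1) →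
      (f x y = 1 ∨ f x y = -1))
    (hf : ∀ (x : Fin k → ℝ) (y : Fin (n - k) → ℝ),
      (∀ i, x i = 1 ∨ x i = -1) → (∀ j, y j = 1 ∨ y j = -1) →
      f x y = φ y * ∏ i, (x i + κ i) - B)
    (hφ : ((∃ y : Fin (n - k) → ℝ, (∀ j, y j = 1 ∨ y j = -1) ∧ φ y ≠ 0) ∧ 2 ≤ k) ∨
      ((∃ y y' : Fin (n - k) → ℝ, (∀ j, y j = 1 ∨ y j = -1) ∧ (∀ j, y' j = 1 ∨ y' j = -1) ∧
        φ y ≠ φ y') ∧ 1 ≤ k)) :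
    ((∀ i, κ i = 0) ∧ B = 0 ∧
      (∀ y : Fin (n - k) → ℝ, (∀ j, y j = 1 ∨ y j = -1) → (φ y = 1 ∨ φ y = -1)) ∧
      (∀ (x : Fin k → ℝ) (y : Fin (n - k) → ℝ),
        (∀ i, x i = 1 ∨ x i = -1) → (∀ j, y j = 1 ∨ y j = -1) →
        f x y = φ y * ∏ i, x i)) ∨
    ((∀ i, κ i = 1 ∨ κ i = -1) ∧ (B = 1 ∨ B = -1) ∧
      ∃ φt : (Fin (n - k) → ℝ) → ℝ,
        (∀ y : Fin (n - k) → ℝ, (∀ j, y j = 1 ∨ y j = -1) → (φt y = 0 ∨ φt y = 1)) ∧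
        ∀ (x : Fin k → ℝ) (y : Fin (n - k) → ℝ),
          (∀ i, x i = 1 ∨ x i = -1) → (∀ j, y j = 1 ∨ y j = -1) →
          f x y = φt y * (2 * B * ∏ i, ((κ i * x i + 1) / 2)) - B) := by
  have key : ∀ y, IsSignVec y → IsBooleanProd κ B (φ y) := fun y hy x hx => by
    rw [← hf x y hx hy]; exact hBool x y hx hy
  obtain ⟨y₀, hy₀, hφy₀⟩ : ∃ y, IsSignVec y ∧ φ y ≠ 0 := by
    rcases hφ with ⟨⟨y, hy, hφy⟩, -⟩ | ⟨⟨y, y', hy, hy', hne⟩, -⟩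
    · exact ⟨y, hy, hφy⟩
    · by_cases h : φ y = 0
      · exact ⟨y', hy', fun h' => hne (h.trans h'.symm)⟩
      · exact ⟨y, hy, h⟩
  have hsq := (key y₀ hy₀).sq_eq_sq hφy₀
  by_cases hB : B = 0
  · have hκ : ∀ i, κ i = 0 := fun i => pow_eq_zero_iff two_ne_zero |>.1 (by rw [hsq, hB]; ring)
    left
    refine ⟨hκ, hB, fun y hy => ?_, fun x y hx hy => ?_⟩
    · simpa [IsSign, hκ, hB] using key y hy _ isSignVec_one
    · simp [hf x y hx hy, hκ, hB]
  · have hB1 : B ^ 2 = 1 := by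
      by_contra hB1
      have hκ : ∀ i, κ i ^ 2 ≠ 1 := fun i => hsq i ▸ hB1
      rcases hφ with ⟨-, hk⟩ | ⟨⟨y, y', hy, hy', hne⟩, hk⟩
      · have := Fin.nontrivial_iff_two_le.2 hk
        have := (key y₀ hy₀).subsingleton hφy₀ hκ hB
        exact false_of_nontrivial_of_subsingleton (Fin k)
      · have := (key y hy).isEmpty (key y' hy') hne hκ hB
        exact IsEmpty.false (⟨0, hk⟩ : Fin k)
    have hκ : IsSignVec κ := fun i => sq_eq_one_iff.1 (by rw [hsq, hB1])
    have hBs : IsSign B := sq_eq_one_iff.1 hB1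
    right
    refine ⟨hκ, hBs, fun y => φ y * (∏ i, κ i) * 2 ^ k / (2 * B), fun y hy => ?_,
      fun x y hx hy => ?_⟩
    · simpa using (key y hy).div_two_mul_eq_zero_or_one hκ hBs
    · rw [hf x y hx hy, prod_add_eq_of_isSignVec hκ, Fintype.card_fin]
      field_simp

/-- Classification of Boolean functions of the form
`f(x,y) = φ(y)·∏_{i=1}^k (xᵢ + κᵢ) − B` on `{-1,1}^k × {-1,1}^{n−k}`. -/
theorem stmt_5 (n k : ℕ) (hn : 1 ≤ n) (hk : 1 ≤ k) (hkn : k ≤ n)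
    (f : (Fin k → ℝ) → (Fin (n - k) → ℝ) → ℝ)
    (φ : (Fin (n - k) → ℝ) → ℝ) (B : ℝ) (κ : Fin k → ℝ)
    (hBool : ∀ (x : Fin k → ℝ) (y : Fin (n - k) → ℝ),
      (∀ i, x i = 1 ∨ x i = -1) → (∀ j, y j = 1 ∨ y j = -1) →
      (f x y = 1 ∨ f x y = -1))
    (hf : ∀ (x : Fin k → ℝ) (y : Fin (n - k) → ℝ),
      (∀ i, x i = 1 ∨ x i = -1) → (∀ j, y j = 1 ∨ y j = -1) →
      f x y = φ y * ∏ i, (x i + κ i) - B)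
    (hφ : ((∃ y : Fin (n - k) → ℝ, (∀ j, y j = 1 ∨ y j = -1) ∧ φ y ≠ 0) ∧ 2 ≤ k) ∨
      ((∃ y y' : Fin (n - k) → ℝ, (∀ j, y j = 1 ∨ y j = -1) ∧ (∀ j, y' j = 1 ∨ y' j = -1) ∧
        φ y ≠ φ y') ∧ 1 ≤ k)) :
    ((∀ i, κ i = 0) ∧ B = 0 ∧
      (∀ y : Fin (n - k) → ℝ, (∀ j, y j = 1 ∨ y j = -1) → (φ y = 1 ∨ φ y = -1)) ∧
      (∀ (x : Fin k → ℝ) (y : Fin (n - k) → ℝ),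
        (∀ i, x i = 1 ∨ x i = -1) → (∀ j, y j = 1 ∨ y j = -1) →
        f x y = φ y * ∏ i, x i)) ∨
    ((∀ i, κ i = 1 ∨ κ i = -1) ∧ (B = 1 ∨ B = -1) ∧
      ∃ φt : (Fin (n - k) → ℝ) → ℝ,
        (∀ y : Fin (n - k) → ℝ, (∀ j, y j = 1 ∨ y j = -1) → (φt y = 0 ∨ φt y = 1)) ∧
        ∀ (x : Fin k → ℝ) (y : Fin (n - k) → ℝ),
          (∀ i, x i = 1 ∨ x i = -1) → (∀ j, y j = 1 ∨ y j = -1) →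
          f x y = φt y * (2 * B * ∏ i, ((κ i * x i + 1) / 2)) - B) :=
  stmt_5_general n k f φ B κ hBool hf hφ
end

section
/- Let f_0,…,f_m : {-1,1}^n → ℝ and g_0,…,g_n : {-1,1}^m → ℝ with g_1,…,g_n and f_1,…,f_m balanced (mean zero). Suppose the generalized polymorphism identity f_0(g_1(z_{1·}),…,g_n(z_{n·})) = g_0(f_1(z_{·1}),…,f_m(z_{·m})) holds for all z ∈ {-1,1}^{n×m}. Then for every S in the Fourier support of f_0 and every choice of sets U_i in the Fourier support of g_i for each i ∈ S, the set T = ∪_{i∈S} U_i lies in the Fourier support of g_0, and for every j ∈ T the set V_j = {i ∈ S : j ∈ U_i} lies in the Fourier support of f_j. -/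
/-!
Expand both sides of the polymorphism identity as multilinear polynomials in the `n * m`
variables `z i j` and compare the coefficients of the monomial `∏ i ∈ S, ∏ j ∈ U i, z i j`,
extracted by correlating with that monomial over the cube. Since the inner functions `g i` are
balanced, a monomial of `f₀ (g₁ (z₁·), …, gₙ (zₙ·))` determines the set `S` and the sets `U i`
it comes from, so its coefficient is `f̂₀ S * ∏ i ∈ S, ĝᵢ (U i) ≠ 0`. Read column by column, the
same monomial is `∏ j ∈ T, ∏ i ∈ V j, z i j`, and the same computation on the right-hand side
shows that its coefficient is `ĝ₀ T * ∏ j ∈ T, f̂ⱼ (V j)`.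
-/

open Finset

namespace BooleanFourier

variable {α β R : Type*} [Fintype α] [DecidableEq α] [CommRing R] [DecidableEq R]

variable (α R) in
def booleanCube : Finset (α → R) := Fintype.piFinset fun _ => {1, -1}

def multilinear (c : Finset α → R) (x : α → R) : R := ∑ S, c S * ∏ i ∈ S, x i

theorem mem_booleanCube {x : α → R} : x ∈ booleanCube α R ↔ ∀ i, x i = 1 ∨ x i = -1 := by
  simp [booleanCube]

theorem sum_booleanCube_prod [NeZero (2 : R)] (h : α → R → R) :
    ∑ x ∈ booleanCube α R, ∏ i, h i (x i) = ∏ i, (h i 1 + h i (-1)) := by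
  have one_ne_neg_one : (1 : R) ≠ -1 := fun h =>
    (two_ne_zero : (2 : R) ≠ 0) (by linear_combination h)
  simp only [booleanCube, ← prod_univ_sum, sum_pair one_ne_neg_one]

theorem sum_booleanCube_prod_mul_prod [NeZero (2 : R)] (T W : Finset α) :
    ∑ x ∈ booleanCube α R, (∏ i ∈ T, x i) * ∏ i ∈ W, x i
      = if T = W then 2 ^ Fintype.card α else 0 := by
  let h : α → R → R := fun i t => (if i ∈ T then t else 1) * (if i ∈ W then t else 1)
  have hprod (x : α → R) : (∏ i ∈ T, x i) * ∏ i ∈ W, x i = ∏ i, h i (x i) := by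
    rw [prod_mul_distrib, Fintype.prod_ite_mem, Fintype.prod_ite_mem]
  have hfactor (i : α) : h i 1 + h i (-1) = if (i ∈ T ↔ i ∈ W) then 2 else 0 := by
    simp only [h]; split_ifs <;> norm_num <;> tauto
  simp only [hprod, sum_booleanCube_prod, hfactor, Fintype.prod_ite_zero, prod_const, card_univ,
    ← Finset.ext_iff]

theorem sum_booleanCube_multilinear_mul_prod [NeZero (2 : R)] (c : Finset α → R) (W : Finset α) :
    ∑ x ∈ booleanCube α R, multilinear c x * ∏ i ∈ W, x i = 2 ^ Fintype.card α * c W := by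
  simp only [multilinear, sum_mul, mul_assoc]
  rw [sum_comm]
  simp only [← mul_sum, sum_booleanCube_prod_mul_prod, mul_ite, mul_zero]
  rw [sum_ite_eq' univ W, if_pos (mem_univ W), mul_comm]

variable [Fintype β] [DecidableEq β]

theorem sum_piFinset_booleanCube_swap {M : Type*} [AddCommMonoid M] (h : (α → β → R) → M) :
    ∑ z ∈ Fintype.piFinset (fun _ : α => booleanCube β R), h z
      = ∑ w ∈ Fintype.piFinset (fun _ : β => booleanCube α R), h (Function.swap w) := by
  refine sum_nbij' Function.swap Function.swap ?_ ?_ (fun _ _ => rfl) (fun _ _ => rfl)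
    (fun _ _ => rfl) <;>
  · intro z hz
    simp only [Fintype.mem_piFinset, mem_booleanCube] at hz ⊢
    exact fun i j => hz j i

theorem sum_booleanCube_ite_mul_ite [NeZero (2 : R)] (p q : Prop) [Decidable p] [Decidable q]
    (c : Finset α → R) (hc : c ∅ = 0) (W : Finset α) (hW : q → W ≠ ∅) :
    ∑ x ∈ booleanCube α R, (if p then multilinear c x else 1) * (if q then ∏ i ∈ W, x i else 1)
      = 2 ^ Fintype.card α * if (p ↔ q) then (if q then c W else 1) else 0 := by
  by_cases hp : p <;> by_cases hq : q
  · simp only [hp, hq, if_true, iff_self, sum_booleanCube_multilinear_mul_prod]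
  · simpa [hp, hq, hc] using sum_booleanCube_multilinear_mul_prod c ∅
  · simpa [hp, hq, eq_comm, hW hq] using sum_booleanCube_prod_mul_prod (R := R) ∅ W
  · simpa [hp, hq] using sum_booleanCube_prod_mul_prod (R := R) (∅ : Finset α) ∅

theorem sum_prod_multilinear_mul_prod [NeZero (2 : R)] (G : α → Finset β → R)
    (hG : ∀ i, G i ∅ = 0) (S' S : Finset α) (W : α → Finset β) (hW : ∀ i ∈ S, W i ≠ ∅) :
    ∑ z ∈ Fintype.piFinset (fun _ : α => booleanCube β R),
        (∏ i ∈ S', multilinear (G i) (z i)) * ∏ i ∈ S, ∏ j ∈ W i, z i j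
      = (2 ^ Fintype.card β) ^ Fintype.card α * if S' = S then ∏ i ∈ S, G i (W i) else 0 := by
  let h : α → (β → R) → R := fun i x =>
    (if i ∈ S' then multilinear (G i) x else 1) * (if i ∈ S then ∏ j ∈ W i, x j else 1)
  have hprod (z : α → β → R) :
      (∏ i ∈ S', multilinear (G i) (z i)) * ∏ i ∈ S, ∏ j ∈ W i, z i j = ∏ i, h i (z i) := by
    rw [prod_mul_distrib, Fintype.prod_ite_mem, Fintype.prod_ite_mem]
  rw [sum_congr rfl fun z _ => hprod z, ← prod_univ_sum (fun _ => booleanCube β R) h]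
  simp only [h, sum_booleanCube_ite_mul_ite _ _ _ (hG _) _ (hW _), prod_mul_distrib, prod_const,
    card_univ, Fintype.prod_ite_zero, Fintype.prod_ite_mem, ← Finset.ext_iff]

theorem sum_multilinear_comp_mul_prod [NeZero (2 : R)] (F : Finset α → R)
    (G : α → Finset β → R) (hG : ∀ i, G i ∅ = 0) (S : Finset α) (W : α → Finset β)
    (hW : ∀ i ∈ S, W i ≠ ∅) :
    ∑ z ∈ Fintype.piFinset (fun _ : α => booleanCube β R),
        multilinear F (fun i => multilinear (G i) (z i)) * ∏ i ∈ S, ∏ j ∈ W i, z i j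
      = (2 ^ Fintype.card β) ^ Fintype.card α * (F S * ∏ i ∈ S, G i (W i)) := by
  have hexp (y : α → R) (w : R) :
      multilinear F y * w = ∑ S', F S' * ((∏ i ∈ S', y i) * w) := by
    simp only [multilinear, sum_mul, mul_assoc]
  simp only [hexp]
  rw [sum_comm]
  simp only [← mul_sum, sum_prod_multilinear_mul_prod G hG _ S W hW, mul_ite, mul_zero,
    sum_ite_eq', mem_univ, if_true]
  ring

end BooleanFourier

open BooleanFourier in
/-- Support propagation for generalized polymorphisms with balanced
inner functions. Here `f 0 = f₀`, `f j.succ = f_j` for `j ∈ [m]`, and similarly for `g`;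
`fc`, `gc` are the Fourier coefficient functions, and each function is identified with
its multilinear extension. -/
theorem stmt_6 (n m : ℕ)
    (f : Fin (m + 1) → (Fin n → ℝ) → ℝ) (g : Fin (n + 1) → (Fin m → ℝ) → ℝ)
    (fc : Fin (m + 1) → Finset (Fin n) → ℝ) (gc : Fin (n + 1) → Finset (Fin m) → ℝ)
    (hfexp : ∀ (j : Fin (m + 1)) (x : Fin n → ℝ),
      f j x = ∑ S : Finset (Fin n), fc j S * ∏ i ∈ S, x i)
    (hgexp : ∀ (i : Fin (n + 1)) (y : Fin m → ℝ),
      g i y = ∑ T : Finset (Fin m), gc i T * ∏ j ∈ T, y j)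
    (hbalf : ∀ j : Fin m, fc j.succ ∅ = 0)
    (hbalg : ∀ i : Fin n, gc i.succ ∅ = 0)
    (hpoly : ∀ z : Fin n → Fin m → ℝ, (∀ i j, z i j = 1 ∨ z i j = -1) →
      f 0 (fun i => g i.succ (z i)) = g 0 (fun j => f j.succ (fun i => z i j)))
    (S : Finset (Fin n)) (hS : fc 0 S ≠ 0)
    (U : Fin n → Finset (Fin m)) (hU : ∀ i ∈ S, gc i.succ (U i) ≠ 0) :
    gc 0 (S.biUnion U) ≠ 0 ∧
      ∀ j ∈ S.biUnion U, fc j.succ (S.filter (fun i => j ∈ U i)) ≠ 0 := by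
  set T := S.biUnion U
  set V : Fin m → Finset (Fin n) := fun j => S.filter (fun i => j ∈ U i)
  have hf (j : Fin (m + 1)) : f j = multilinear (fc j) := funext (hfexp j)
  have hg (i : Fin (n + 1)) : g i = multilinear (gc i) := funext (hgexp i)
  simp only [hf, hg] at hpoly
  have hUne : ∀ i ∈ S, U i ≠ ∅ := fun i hi hUi => hU i hi (hUi ▸ hbalg i)
  have hVne : ∀ j ∈ T, V j ≠ ∅ := by
    intro j hj
    obtain ⟨i, hi, hji⟩ := mem_biUnion.1 hj
    exact ne_empty_of_mem (mem_filter.2 ⟨hi, hji⟩)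
  have hweight (z : Fin n → Fin m → ℝ) :
      ∏ i ∈ S, ∏ j ∈ U i, z i j = ∏ j ∈ T, ∏ i ∈ V j, z i j :=
    prod_comm' fun i j => by simp only [T, V, mem_biUnion, mem_filter]; grind
  have hcoeff : (2 ^ m) ^ n * (fc 0 S * ∏ i ∈ S, gc i.succ (U i))
      = (2 ^ n) ^ m * (gc 0 T * ∏ j ∈ T, fc j.succ (V j)) := by
    have hleft := sum_multilinear_comp_mul_prod (fc 0) (fun i => gc i.succ) hbalg S U hUne
    have hright := sum_multilinear_comp_mul_prod (gc 0) (fun j => fc j.succ) hbalf T V hVne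
    simp only [Fintype.card_fin] at hleft hright
    rw [← hleft, ← hright, sum_piFinset_booleanCube_swap (α := Fin m)]
    refine sum_congr rfl fun z hz => ?_
    simp only [Fintype.mem_piFinset, mem_booleanCube] at hz
    rw [hweight, hpoly z hz]
  rw [pow_right_comm] at hcoeff
  have hprod : gc 0 T * ∏ j ∈ T, fc j.succ (V j) ≠ 0 := by
    rw [← mul_left_cancel₀ (by positivity) hcoeff]
    exact mul_ne_zero hS (prod_ne_zero_iff.2 hU)
  exact ⟨left_ne_zero_of_mul hprod, prod_ne_zero_iff.1 (right_ne_zero_of_mul hprod)⟩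
end

section
/- Let f_0,…,f_m : {-1,1}^n → ℝ and g_0,…,g_n : {-1,1}^m → ℝ satisfy the generalized polymorphism identity f_0∘(g_1,…,g_n) = g_0∘(f_1,…,f_m) on {-1,1}^{n×m}, with g_1,…,g_n, f_1,…,f_m balanced. Then for any S ⊆ [n] with S in the support of f̂_0, sets U_i ∈ supp(ĝ_i) for i ∈ S, T = ∪_{i∈S} U_i, and V_j = {i ∈ S : j ∈ U_i} for j ∈ T, the Fourier coefficients satisfy f̂_0(S)·∏_{i∈S} ĝ_i(U_i) = ĝ_0(T)·∏_{j∈T} f̂_j(V_j). -/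
/-!
Both sides of the polymorphism identity are multilinear polynomials in the variables `z i j`, and
on the cube `{±1}^{n×m}` the coefficient of a monomial is read off by summing against it
(orthogonality of characters). Expanding `f₀ ∘ (g₁, …, gₙ)`, the monomial
`∏_{i∈S} ∏_{j∈Uᵢ} z i j` with all `Uᵢ` nonempty occurs only in the term `f̂₀(S) ∏ ĝᵢ(Uᵢ)`, since
balancedness kills the terms in which some `gᵢ` contributes its constant coefficient. The same
monomial read column by column is `∏_{j∈T} ∏_{i∈Vⱼ} z i j`, which on the other side has
coefficient `ĝ₀(T) ∏ f̂ⱼ(Vⱼ)`.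
-/

open Finset

noncomputable section

variable {ι κ : Type*} [Fintype ι] [DecidableEq ι] [Fintype κ] [DecidableEq κ]

def signCube (ι : Type*) [Fintype ι] [DecidableEq ι] : Finset (ι → ℝ) :=
  Fintype.piFinset fun _ => {1, -1}

def evalMultilinear (c : Finset ι → ℝ) (x : ι → ℝ) : ℝ :=
  ∑ A, c A * ∏ i ∈ A, x i

theorem sum_signCube_prod (φ : ι → ℝ → ℝ) :
    ∑ x ∈ signCube ι, ∏ i, φ i (x i) = ∏ i, (φ i 1 + φ i (-1)) := by
  rw [signCube, ← prod_univ_sum]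
  refine prod_congr rfl fun i _ => sum_pair ?_
  norm_num

theorem prod_ite_mem_iff_mem (A B : Finset ι) (a : ι → ℝ) :
    ∏ i, (if (i ∈ A ↔ i ∈ B) then a i else 0) = if A = B then ∏ i, a i else 0 := by
  split_ifs with h
  · subst h; simp
  · obtain ⟨i, hi⟩ : ∃ i, ¬(i ∈ A ↔ i ∈ B) := by
      by_contra! hc; exact h (Finset.ext hc)
    exact prod_eq_zero (mem_univ i) (if_neg hi)

theorem sum_signCube_monomial_mul_monomial (A B : Finset ι) :
    ∑ x ∈ signCube ι, (∏ i ∈ A, x i) * ∏ i ∈ B, x i = if A = B then 2 ^ Fintype.card ι else 0 := by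
  have hprod (x : ι → ℝ) : (∏ i ∈ A, x i) * ∏ i ∈ B, x i =
      ∏ i, (if i ∈ A then x i else 1) * (if i ∈ B then x i else 1) := by
    rw [prod_mul_distrib, prod_ite_mem_eq, prod_ite_mem_eq]
  rw [sum_congr rfl fun x _ => hprod x,
    sum_signCube_prod fun i t => (if i ∈ A then t else 1) * (if i ∈ B then t else 1)]
  have hcoord : ∀ i, ((if i ∈ A then (1:ℝ) else 1) * (if i ∈ B then 1 else 1) +
      (if i ∈ A then -1 else 1) * (if i ∈ B then -1 else 1)) =
      if (i ∈ A ↔ i ∈ B) then 2 else 0 := by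
    intro i; by_cases hA : i ∈ A <;> by_cases hB : i ∈ B <;> simp [hA, hB] <;> norm_num
  simp_rw [hcoord, prod_ite_mem_iff_mem, prod_const, card_univ]

theorem sum_signCube_monomial (A : Finset ι) :
    ∑ x ∈ signCube ι, ∏ i ∈ A, x i = if A = ∅ then 2 ^ Fintype.card ι else 0 := by
  simpa [eq_comm] using sum_signCube_monomial_mul_monomial ∅ A

theorem sum_signCube_evalMultilinear_mul_monomial (c : Finset ι → ℝ) (A : Finset ι) :
    ∑ x ∈ signCube ι, evalMultilinear c x * ∏ i ∈ A, x i = 2 ^ Fintype.card ι * c A := by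
  simp_rw [evalMultilinear, sum_mul, mul_assoc]
  rw [sum_comm]
  simp_rw [← mul_sum, sum_signCube_monomial_mul_monomial]
  simp [mul_comm]

theorem sum_signCube_ite_evalMultilinear_mul_monomial (c : Finset ι → ℝ) (p : Prop) [Decidable p]
    (A : Finset ι) :
    ∑ x ∈ signCube ι, (if p then evalMultilinear c x else 1) * ∏ i ∈ A, x i =
      if p then 2 ^ Fintype.card ι * c A else if A = ∅ then 2 ^ Fintype.card ι else 0 := by
  by_cases hp : p
  · simp only [hp, if_true]
    exact sum_signCube_evalMultilinear_mul_monomial c A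
  · simp only [hp, if_false, one_mul]
    exact sum_signCube_monomial A

theorem sum_piFinset_signCube_prod_evalMultilinear_mul_monomial (d : ι → Finset κ → ℝ)
    (hd : ∀ i, d i ∅ = 0) (S S' : Finset ι) (U : ι → Finset κ) (hU : ∀ i ∈ S, U i ≠ ∅) :
    ∑ z ∈ Fintype.piFinset fun _ : ι => signCube κ,
        (∏ i ∈ S', evalMultilinear (d i) (z i)) * ∏ i ∈ S, ∏ j ∈ U i, z i j =
      if S' = S then (2 ^ Fintype.card κ) ^ Fintype.card ι * ∏ i ∈ S, d i (U i) else 0 := by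
  -- A coordinate in exactly one of `S`, `S'` contributes `d i ∅ = 0` or the vanishing sum of a
  -- nonconstant monomial.
  set A : ι → Finset κ := fun i => if i ∈ S then U i else ∅
  have hprod (z : ι → κ → ℝ) : (∏ i ∈ S', evalMultilinear (d i) (z i)) * ∏ i ∈ S, ∏ j ∈ U i, z i j =
      ∏ i, (if i ∈ S' then evalMultilinear (d i) (z i) else 1) * ∏ j ∈ A i, z i j := by
    rw [prod_mul_distrib, prod_ite_mem_eq, ← prod_ite_mem_eq S]
    congr 1
    refine prod_congr rfl fun i _ => ?_
    by_cases hi : i ∈ S <;> simp [A, hi]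
  have hcoord (i : ι) : (if i ∈ S' then 2 ^ Fintype.card κ * d i (A i)
      else if A i = ∅ then 2 ^ Fintype.card κ else 0) =
      if (i ∈ S' ↔ i ∈ S) then 2 ^ Fintype.card κ * (if i ∈ S then d i (U i) else 1) else 0 := by
    by_cases hi' : i ∈ S' <;> by_cases hi : i ∈ S
    · simp [A, hi, hi']
    · simp [A, hi, hi', hd]
    · simp [A, hi, hi', hU]
    · simp [A, hi, hi']
  rw [sum_congr rfl fun z _ => hprod z, ← prod_univ_sum (fun _ => signCube κ)
    fun i y => (if i ∈ S' then evalMultilinear (d i) y else 1) * ∏ j ∈ A i, y j]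
  simp_rw [sum_signCube_ite_evalMultilinear_mul_monomial, hcoord, prod_ite_mem_iff_mem,
    prod_mul_distrib, prod_const, card_univ, prod_ite_mem_eq]

theorem sum_piFinset_signCube_evalMultilinear_comp_mul_monomial (c : Finset ι → ℝ)
    (d : ι → Finset κ → ℝ) (hd : ∀ i, d i ∅ = 0) (S : Finset ι) (U : ι → Finset κ)
    (hU : ∀ i ∈ S, U i ≠ ∅) :
    ∑ z ∈ Fintype.piFinset fun _ : ι => signCube κ,
        evalMultilinear c (fun i => evalMultilinear (d i) (z i)) * ∏ i ∈ S, ∏ j ∈ U i, z i j =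
      (2 ^ Fintype.card κ) ^ Fintype.card ι * (c S * ∏ i ∈ S, d i (U i)) := by
  have hc (x : ι → ℝ) : evalMultilinear c x = ∑ A, c A * ∏ i ∈ A, x i := rfl
  simp_rw [hc, sum_mul, mul_assoc]
  rw [sum_comm]
  simp_rw [← mul_sum, sum_piFinset_signCube_prod_evalMultilinear_mul_monomial d hd _ _ U hU]
  simp [mul_left_comm]

theorem sum_piFinset_signCube_swap (φ : (ι → κ → ℝ) → ℝ) :
    ∑ z ∈ Fintype.piFinset fun _ : ι => signCube κ, φ z =
      ∑ w ∈ Fintype.piFinset fun _ : κ => signCube ι, φ (Function.swap w) := by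
  refine sum_nbij' Function.swap Function.swap ?_ ?_ (fun _ _ => rfl) (fun _ _ => rfl)
    (fun _ _ => rfl)
  all_goals
    intro z hz
    simp only [signCube, Fintype.mem_piFinset] at hz ⊢
    exact fun a b => hz b a

end

theorem stmt_7_general (n m : ℕ)
    (f : Fin (m + 1) → (Fin n → ℝ) → ℝ) (g : Fin (n + 1) → (Fin m → ℝ) → ℝ)
    (fc : Fin (m + 1) → Finset (Fin n) → ℝ) (gc : Fin (n + 1) → Finset (Fin m) → ℝ)
    (hfexp : ∀ (j : Fin (m + 1)) (x : Fin n → ℝ),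
      f j x = ∑ S : Finset (Fin n), fc j S * ∏ i ∈ S, x i)
    (hgexp : ∀ (i : Fin (n + 1)) (y : Fin m → ℝ),
      g i y = ∑ T : Finset (Fin m), gc i T * ∏ j ∈ T, y j)
    (hbalf : ∀ j : Fin m, fc j.succ ∅ = 0)
    (hbalg : ∀ i : Fin n, gc i.succ ∅ = 0)
    (hpoly : ∀ z : Fin n → Fin m → ℝ, (∀ i j, z i j = 1 ∨ z i j = -1) →
      f 0 (fun i => g i.succ (z i)) = g 0 (fun j => f j.succ (fun i => z i j)))
    (S : Finset (Fin n))
    (U : Fin n → Finset (Fin m)) (hU : ∀ i ∈ S, gc i.succ (U i) ≠ 0) :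
    fc 0 S * ∏ i ∈ S, gc i.succ (U i) =
      gc 0 (S.biUnion U) *
        ∏ j ∈ S.biUnion U, fc j.succ (S.filter (fun i => j ∈ U i)) := by
  set T := S.biUnion U
  set V : Fin m → Finset (Fin n) := fun j => S.filter (fun i => j ∈ U i)
  have hf : ∀ j, f j = evalMultilinear (fc j) := fun j => funext (hfexp j)
  have hg : ∀ i, g i = evalMultilinear (gc i) := fun i => funext (hgexp i)
  have hUne : ∀ i ∈ S, U i ≠ ∅ := fun i hi hUi => hU i hi (hUi ▸ hbalg i)
  have hVne : ∀ j ∈ T, V j ≠ ∅ := fun j hj => by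
    obtain ⟨i, hi, hij⟩ := mem_biUnion.mp hj
    exact ne_empty_of_mem (mem_filter.mpr ⟨hi, hij⟩)
  have hmonomial (z : Fin n → Fin m → ℝ) :
      ∏ i ∈ S, ∏ j ∈ U i, z i j = ∏ j ∈ T, ∏ i ∈ V j, z i j :=
    prod_comm' fun i j => by simp only [T, V, mem_filter, mem_biUnion]; grind
  have hcoeff : (2 ^ m) ^ n * (fc 0 S * ∏ i ∈ S, gc i.succ (U i)) =
      (2 ^ n) ^ m * (gc 0 T * ∏ j ∈ T, fc j.succ (V j)) := by
    simp only [hf, hg] at hpoly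
    calc _ = ∑ z ∈ Fintype.piFinset fun _ => signCube (Fin m),
            evalMultilinear (fc 0) (fun i => evalMultilinear (gc i.succ) (z i)) *
              ∏ i ∈ S, ∏ j ∈ U i, z i j := by
          simpa using (sum_piFinset_signCube_evalMultilinear_comp_mul_monomial (fc 0)
            (fun i => gc i.succ) hbalg S U hUne).symm
      _ = ∑ w ∈ Fintype.piFinset fun _ => signCube (Fin n),
            evalMultilinear (gc 0) (fun j => evalMultilinear (fc j.succ) (w j)) *
              ∏ j ∈ T, ∏ i ∈ V j, w j i := by
          rw [sum_piFinset_signCube_swap]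
          refine sum_congr rfl fun w hw => ?_
          simp only [signCube, Fintype.mem_piFinset, mem_insert, mem_singleton] at hw
          rw [hpoly _ fun i j => hw j i, hmonomial]
      _ = _ := by
          simpa using sum_piFinset_signCube_evalMultilinear_comp_mul_monomial (gc 0)
            (fun j => fc j.succ) hbalf T V hVne
  rw [← pow_mul, ← pow_mul, mul_comm m n] at hcoeff
  exact mul_left_cancel₀ (pow_ne_zero _ two_ne_zero) hcoeff

/-- The basic Fourier coefficient identity for generalized
polymorphisms with balanced inner functions:
`f̂₀(S)·∏_{i∈S} ĝᵢ(Uᵢ) = ĝ₀(T)·∏_{j∈T} f̂ⱼ(Vⱼ)`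
where `T = ⋃_{i∈S} Uᵢ` and `Vⱼ = {i ∈ S : j ∈ Uᵢ}`. -/
theorem stmt_7 (n m : ℕ)
    (f : Fin (m + 1) → (Fin n → ℝ) → ℝ) (g : Fin (n + 1) → (Fin m → ℝ) → ℝ)
    (fc : Fin (m + 1) → Finset (Fin n) → ℝ) (gc : Fin (n + 1) → Finset (Fin m) → ℝ)
    (hfexp : ∀ (j : Fin (m + 1)) (x : Fin n → ℝ),
      f j x = ∑ S : Finset (Fin n), fc j S * ∏ i ∈ S, x i)
    (hgexp : ∀ (i : Fin (n + 1)) (y : Fin m → ℝ),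
      g i y = ∑ T : Finset (Fin m), gc i T * ∏ j ∈ T, y j)
    (hbalf : ∀ j : Fin m, fc j.succ ∅ = 0)
    (hbalg : ∀ i : Fin n, gc i.succ ∅ = 0)
    (hpoly : ∀ z : Fin n → Fin m → ℝ, (∀ i j, z i j = 1 ∨ z i j = -1) →
      f 0 (fun i => g i.succ (z i)) = g 0 (fun j => f j.succ (fun i => z i j)))
    (S : Finset (Fin n)) (hS : fc 0 S ≠ 0)
    (U : Fin n → Finset (Fin m)) (hU : ∀ i ∈ S, gc i.succ (U i) ≠ 0) :
    fc 0 S * ∏ i ∈ S, gc i.succ (U i) =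
      gc 0 (S.biUnion U) *
        ∏ j ∈ S.biUnion U, fc j.succ (S.filter (fun i => j ∈ U i)) :=
  stmt_7_general n m f g fc gc hfexp hgexp hbalf hbalg hpoly S U hU
end

section
/- Let f_0,…,f_m, g_0,…,g_n satisfy the generalized polymorphism identity with g_1,…,g_n, f_1,…,f_m balanced and nonconstant. If S is inclusion-maximal in the Fourier support of f_0 and each U_i (i ∈ S) is inclusion-maximal in the Fourier support of g_i, then T = ∪_{i∈S} U_i is inclusion-maximal in the Fourier support of g_0, and each V_j = {i ∈ S : j ∈ U_i} (j ∈ T) is inclusion-maximal in the Fourier support of f_j. -/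
/-!
Identify the cube `{-1,1}^(n×m)` with `Fin n → Fin m → Bool` and a set of coordinates with a
relation `R`, given by its rows `R i`. Expanding both sides of the polymorphism identity in the
Walsh basis, the character of `R` has coefficient `f̂₀(dom R) * ∏_{i ∈ dom R} ĝᵢ(R i)` on the left
and `ĝ₀(dom Rᵀ) * ∏_{j ∈ dom Rᵀ} f̂ⱼ(Rᵀ j)` on the right: every other term of the expansion that
lands on this character contains a factor `ĝᵢ(∅)` or `f̂ⱼ(∅)`, which vanishes by balancedness.

The hypotheses say that `R = ⋃_{i ∈ S} {i} × Uᵢ` is maximal among relations with nonzero left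
product, hence `Rᵀ` is maximal among relations with nonzero right product. Conversely, since every
nonconstant `fⱼ` has a nonempty set in its Fourier support, maximality of `Rᵀ` forces its domain
`T` to be maximal for `ĝ₀` and each row `Vⱼ` to be maximal for `f̂ⱼ`.
-/

open Finset

noncomputable def boolSign (b : Bool) : ℝ := if b then 1 else -1

lemma boolSign_eq_one_or_neg_one (b : Bool) : boolSign b = 1 ∨ boolSign b = -1 := by
  cases b <;> simp [boolSign]

lemma boolSign_mul_self (b : Bool) : boolSign b * boolSign b = 1 := by
  cases b <;> norm_num [boolSign]

section Walsh

variable {ι : Type*} [Fintype ι] [DecidableEq ι]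

noncomputable def walsh (A : Finset ι) (σ : ι → Bool) : ℝ := ∏ p ∈ A, boolSign (σ p)

lemma walsh_eq_prod_ite (A : Finset ι) (σ : ι → Bool) :
    walsh A σ = ∏ p, if p ∈ A then boolSign (σ p) else 1 :=
  (Fintype.prod_ite_mem A _).symm

lemma walsh_mul_walsh (A B : Finset ι) (σ : ι → Bool) :
    walsh A σ * walsh B σ = walsh (symmDiff A B) σ := by
  simp only [walsh_eq_prod_ite, ← prod_mul_distrib]
  refine Fintype.prod_congr _ _ fun p => ?_
  by_cases hA : p ∈ A <;> by_cases hB : p ∈ B <;> simp [mem_symmDiff, hA, hB, boolSign_mul_self]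

lemma sum_walsh (A : Finset ι) :
    ∑ σ, walsh A σ = if A = ∅ then (2 : ℝ) ^ Fintype.card ι else 0 := by
  simp only [walsh_eq_prod_ite]
  rw [← Fintype.prod_sum (fun p b => if p ∈ A then boolSign b else 1)]
  have hrow : ∀ p, ∑ b : Bool, (if p ∈ A then boolSign b else 1) = if p ∉ A then 2 else 0 := by
    intro p
    by_cases hp : p ∈ A <;> norm_num [hp, boolSign]
  simp only [hrow, Finset.prod_ite_zero, prod_const, card_univ, mem_univ, true_imp_iff]
  simp [eq_empty_iff_forall_notMem]

lemma sum_walsh_mul_sum (c : Finset ι → ℝ) (B : Finset ι) :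
    ∑ σ, walsh B σ * ∑ A, c A * walsh A σ = 2 ^ Fintype.card ι * c B := by
  simp only [mul_sum, mul_left_comm (walsh B _), walsh_mul_walsh]
  rw [sum_comm]
  simp only [← mul_sum, sum_walsh, ← bot_eq_empty, symmDiff_eq_bot, mul_ite, mul_zero]
  rw [sum_ite_eq, if_pos (mem_univ B), mul_comm]

end Walsh

lemma exists_nonempty_coeff_ne_zero {ι : Type*} [Fintype ι] {φ : (ι → ℝ) → ℝ}
    {c : Finset ι → ℝ} (hφ : ∀ x, φ x = ∑ A, c A * ∏ i ∈ A, x i) {x x' : ι → ℝ}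
    (hxx' : φ x ≠ φ x') : ∃ A : Finset ι, A.Nonempty ∧ c A ≠ 0 := by
  by_contra! h
  have hconst : ∀ y, φ y = c ∅ := fun y => by
    rw [hφ, sum_eq_single ∅ (fun A _ hA => by rw [h A (nonempty_iff_ne_empty.2 hA), zero_mul])
      (fun h => absurd (mem_univ _) h), prod_empty, mul_one]
  exact hxx' ((hconst x).trans (hconst x').symm)

lemma OrderIso.maximal_apply_iff {X Y : Type*} [PartialOrder X] [PartialOrder Y] (e : X ≃o Y)
    {P : Y → Prop} {x : X} : Maximal P (e x) ↔ Maximal (fun x => P (e x)) x :=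
  e.toOrderEmbedding.maximal_apply_mem_iff (t := {y | P y}) (by simp)

section Relation

variable {α β : Type*} [Fintype α]

def relDom (R : α → Finset β) : Finset α := univ.filter fun i => (R i).Nonempty

lemma mem_relDom {R : α → Finset β} {i : α} : i ∈ relDom R ↔ (R i).Nonempty := by
  simp [relDom]

lemma relDom_mono {R R' : α → Finset β} (h : R ≤ R') : relDom R ⊆ relDom R' := fun i hi =>
  mem_relDom.2 ((mem_relDom.1 hi).mono (h i))

def compCoeff (F : Finset α → ℝ) (G : α → Finset β → ℝ) (R : α → Finset β) : ℝ :=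
  F (relDom R) * ∏ i ∈ relDom R, G i (R i)

lemma compCoeff_ne_zero_iff {F : Finset α → ℝ} {G : α → Finset β → ℝ} {R : α → Finset β} :
    compCoeff F G R ≠ 0 ↔ F (relDom R) ≠ 0 ∧ ∀ i ∈ relDom R, G i (R i) ≠ 0 := by
  rw [compCoeff, mul_ne_zero_iff, prod_ne_zero_iff]

variable [DecidableEq α] [DecidableEq β]

lemma prod_ite_eq_ite_relDom {G : α → Finset β → ℝ} (hG : ∀ i, G i ∅ = 0) (S : Finset α)
    (R : α → Finset β) :
    ∏ i, (if i ∈ S then G i (R i) else if R i = ∅ then 1 else 0)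
      = if S = relDom R then ∏ i ∈ relDom R, G i (R i) else 0 := by
  split_ifs with hS
  · rw [← Fintype.prod_ite_mem (relDom R)]
    refine Fintype.prod_congr _ _ fun i => ?_
    by_cases hi : R i = ∅ <;> simp [hS, mem_relDom, nonempty_iff_ne_empty, hi]
  · obtain ⟨i, hi⟩ : ∃ i, ¬(i ∈ S ↔ i ∈ relDom R) := by
      by_contra! h
      exact hS (ext h)
    refine prod_eq_zero (mem_univ i) ?_
    by_cases hiS : i ∈ S
    · simp_all [mem_relDom, not_nonempty_iff_eq_empty]
    · simp_all [mem_relDom, nonempty_iff_ne_empty]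

variable [Fintype β]

def relTranspose : (α → Finset β) ≃o (β → Finset α) where
  toFun R j := univ.filter fun i => j ∈ R i
  invFun Q i := univ.filter fun j => i ∈ Q j
  left_inv R := by ext; simp
  right_inv Q := by ext; simp
  map_rel_iff' := by
    intro R R'
    simp only [Equiv.coe_fn_mk, Pi.le_def, subset_iff, mem_filter, mem_univ, true_and]
    exact ⟨fun h i j hj => h j hj, fun h j i hi => h i hi⟩

lemma mem_relTranspose {R : α → Finset β} {i : α} {j : β} : i ∈ relTranspose R j ↔ j ∈ R i := by
  simp [relTranspose]

lemma prod_walsh_relTranspose (R : α → Finset β) (σ : α → β → Bool) :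
    ∏ j, walsh (relTranspose R j) (fun i => σ i j) = ∏ i, walsh (R i) (σ i) := by
  simp only [walsh_eq_prod_ite, mem_relTranspose]
  rw [Finset.prod_comm]

lemma sum_prod_walsh_mul {H : α → (β → Bool) → ℝ} {c : α → Finset β → ℝ}
    (hH : ∀ i τ, H i τ = ∑ A, c i A * walsh A τ) (R : α → Finset β) :
    ∑ σ : α → β → Bool, ∏ i, walsh (R i) (σ i) * H i (σ i)
      = ∏ i, 2 ^ Fintype.card β * c i (R i) := by
  rw [← Fintype.prod_sum (fun i τ => walsh (R i) τ * H i τ)]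
  simp only [hH, sum_walsh_mul_sum]

lemma sum_walsh_mul_comp {F : (α → ℝ) → ℝ} {G : α → (β → ℝ) → ℝ}
    {Fc : Finset α → ℝ} {Gc : α → Finset β → ℝ}
    (hF : ∀ x, F x = ∑ S, Fc S * ∏ i ∈ S, x i)
    (hG : ∀ i y, G i y = ∑ T, Gc i T * ∏ j ∈ T, y j) (hGc : ∀ i, Gc i ∅ = 0)
    (R : α → Finset β) :
    ∑ σ : α → β → Bool, (∏ i, walsh (R i) (σ i)) * F (fun i => G i fun j => boolSign (σ i j))
      = (2 ^ Fintype.card β) ^ Fintype.card α * compCoeff Fc Gc R := by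
  have hexp : ∀ (S : Finset α) i τ, (if i ∈ S then G i (fun j => boolSign (τ j)) else 1)
      = ∑ A, (if i ∈ S then Gc i A else if A = ∅ then 1 else 0) * walsh A τ := by
    intro S i τ
    split_ifs
    · exact hG i _
    · -- the factors `i ∉ S` are the constant `1 = walsh ∅`
      simp [walsh]
  calc _ = ∑ S, Fc S * ∑ σ : α → β → Bool,
          ∏ i, walsh (R i) (σ i) * if i ∈ S then G i (fun j => boolSign (σ i j)) else 1 := by
        simp only [hF, mul_sum, prod_mul_distrib, Fintype.prod_ite_mem]
        rw [sum_comm]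
        simp only [mul_left_comm]
    _ = ∑ S, Fc S * ∏ i, 2 ^ Fintype.card β *
          (if i ∈ S then Gc i (R i) else if R i = ∅ then 1 else 0) :=
        sum_congr rfl fun S _ => by rw [sum_prod_walsh_mul (hexp S)]
    _ = ∑ S, (2 ^ Fintype.card β) ^ Fintype.card α *
          (Fc S * if S = relDom R then ∏ i ∈ relDom R, Gc i (R i) else 0) :=
        sum_congr rfl fun S _ => by
          rw [prod_mul_distrib, prod_const, card_univ, prod_ite_eq_ite_relDom hGc]
          ring
    _ = _ := by simp [compCoeff]

theorem compCoeff_eq_compCoeff_relTranspose {F₀ : (α → ℝ) → ℝ} {G : α → (β → ℝ) → ℝ}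
    {G₀ : (β → ℝ) → ℝ} {F : β → (α → ℝ) → ℝ} {F₀c : Finset α → ℝ} {Gc : α → Finset β → ℝ}
    {G₀c : Finset β → ℝ} {Fc : β → Finset α → ℝ}
    (hF₀ : ∀ x, F₀ x = ∑ S, F₀c S * ∏ i ∈ S, x i)
    (hG : ∀ i y, G i y = ∑ T, Gc i T * ∏ j ∈ T, y j)
    (hG₀ : ∀ y, G₀ y = ∑ T, G₀c T * ∏ j ∈ T, y j)
    (hF : ∀ j x, F j x = ∑ S, Fc j S * ∏ i ∈ S, x i)
    (hGc : ∀ i, Gc i ∅ = 0) (hFc : ∀ j, Fc j ∅ = 0)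
    (hpoly : ∀ z : α → β → ℝ, (∀ i j, z i j = 1 ∨ z i j = -1) →
      F₀ (fun i => G i (z i)) = G₀ (fun j => F j (fun i => z i j)))
    (R : α → Finset β) :
    compCoeff F₀c Gc R = compCoeff G₀c Fc (relTranspose R) := by
  have hsum : ∑ σ : α → β → Bool,
        (∏ i, walsh (R i) (σ i)) * F₀ (fun i => G i fun j => boolSign (σ i j))
      = ∑ τ : β → α → Bool,
        (∏ j, walsh (relTranspose R j) (τ j)) * G₀ (fun j => F j fun i => boolSign (τ j i)) :=
    Fintype.sum_equiv (Equiv.piComm _) _ _ fun σ => by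
      rw [hpoly _ fun i j => boolSign_eq_one_or_neg_one _]
      exact congrArg (· * _) (prod_walsh_relTranspose R σ).symm
  rw [sum_walsh_mul_comp hF₀ hG hGc, sum_walsh_mul_comp hG₀ hF hFc, ← pow_mul, ← pow_mul,
    mul_comm (Fintype.card β)] at hsum
  exact mul_left_cancel₀ (by positivity) hsum

end Relation

section Maximality

variable {α β : Type*} [Fintype α] {F : Finset α → ℝ} {G : α → Finset β → ℝ} {R : α → Finset β}

lemma maximal_compCoeff (hdom : Maximal (F · ≠ 0) (relDom R))
    (hrow : ∀ i ∈ relDom R, Maximal (G i · ≠ 0) (R i)) : Maximal (compCoeff F G · ≠ 0) R := by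
  refine ⟨compCoeff_ne_zero_iff.2 ⟨hdom.prop, fun i hi => (hrow i hi).prop⟩, fun R' hR' hle => ?_⟩
  obtain ⟨hF', hG'⟩ := compCoeff_ne_zero_iff.1 hR'
  have hdom' : relDom R = relDom R' := hdom.eq_of_le hF' (relDom_mono hle)
  intro i
  by_cases hi : i ∈ relDom R
  · exact ((hrow i hi).eq_of_le (hG' i (hdom' ▸ hi)) (hle i)).ge
  · rw [hdom', mem_relDom, not_nonempty_iff_eq_empty] at hi
    simp [hi]

variable [DecidableEq α]

lemma Maximal.relDom_of_compCoeff (hG : ∀ i, ∃ A : Finset β, A.Nonempty ∧ G i A ≠ 0)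
    (h : Maximal (compCoeff F G · ≠ 0) R) : Maximal (F · ≠ 0) (relDom R) := by
  choose W hWne hW using hG
  obtain ⟨hF, hrow⟩ := compCoeff_ne_zero_iff.1 h.prop
  refine ⟨hF, fun T hT hle => ?_⟩
  -- extend `R` over `T \ relDom R` by nonempty sets in the supports of the `G i`
  set R' : α → Finset β := fun i => if i ∈ T \ relDom R then W i else R i
  have hR' : R ≤ R' := fun i => by
    by_cases hi : i ∈ T \ relDom R
    · have hRi : R i = ∅ := not_nonempty_iff_eq_empty.1 (mt mem_relDom.2 (mem_sdiff.1 hi).2)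
      simp only [R', if_pos hi, hRi, empty_subset]
    · simp only [R', if_neg hi, le_refl]
  have hdom' : relDom R' = T := by
    ext i
    by_cases hi : i ∈ T \ relDom R
    · simp only [mem_relDom, R', if_pos hi, hWne, (mem_sdiff.1 hi).1]
    · rw [mem_relDom, show R' i = R i from if_neg hi, ← mem_relDom]
      exact ⟨fun h => hle h, fun hiT => by_contra fun h => hi (mem_sdiff.2 ⟨hiT, h⟩)⟩
  have hR'0 : compCoeff F G R' ≠ 0 := by
    refine compCoeff_ne_zero_iff.2 ⟨hdom' ▸ hT, fun i hi => ?_⟩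
    by_cases hi' : i ∈ T \ relDom R
    · rw [show R' i = W i from if_pos hi']
      exact hW i
    · rw [show R' i = R i from if_neg hi']
      rw [hdom'] at hi
      exact hrow i (by_contra fun h => hi' (mem_sdiff.2 ⟨hi, h⟩))
  rw [← hdom', ← h.eq_of_le hR'0 hR']

lemma Maximal.row_of_compCoeff (h : Maximal (compCoeff F G · ≠ 0) R) {i : α}
    (hi : i ∈ relDom R) : Maximal (G i · ≠ 0) (R i) := by
  obtain ⟨hF, hrow⟩ := compCoeff_ne_zero_iff.1 h.prop
  refine ⟨hrow i hi, fun A hA hle => ?_⟩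
  set R' := Function.update R i A
  have hR' : R ≤ R' := fun j => by
    by_cases hj : j = i
    · subst hj
      simpa [R'] using hle
    · simp [R', Function.update_of_ne hj]
  have hdom' : relDom R' = relDom R := by
    ext j
    by_cases hj : j = i
    · subst hj
      simp [mem_relDom, R', (mem_relDom.1 hi).mono hle, mem_relDom.1 hi]
    · simp [mem_relDom, R', Function.update_of_ne hj]
  have hR'0 : compCoeff F G R' ≠ 0 := by
    refine compCoeff_ne_zero_iff.2 ⟨hdom' ▸ hF, fun j hj => ?_⟩
    rw [hdom'] at hj
    by_cases hji : j = i
    · subst hji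
      simpa [R'] using hA
    · simpa [R', Function.update_of_ne hji] using hrow j hj
  have hRA := congrFun (h.eq_of_le hR'0 hR') i
  simp only [R', Function.update_self] at hRA
  exact hRA.ge

end Maximality

theorem stmt_8_general (n m : ℕ)
    (f : Fin (m + 1) → (Fin n → ℝ) → ℝ) (g : Fin (n + 1) → (Fin m → ℝ) → ℝ)
    (fc : Fin (m + 1) → Finset (Fin n) → ℝ) (gc : Fin (n + 1) → Finset (Fin m) → ℝ)
    (hfexp : ∀ (j : Fin (m + 1)) (x : Fin n → ℝ),
      f j x = ∑ S : Finset (Fin n), fc j S * ∏ i ∈ S, x i)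
    (hgexp : ∀ (i : Fin (n + 1)) (y : Fin m → ℝ),
      g i y = ∑ T : Finset (Fin m), gc i T * ∏ j ∈ T, y j)
    (hbalf : ∀ j : Fin m, fc j.succ ∅ = 0)
    (hbalg : ∀ i : Fin n, gc i.succ ∅ = 0)
    (hncf : ∀ j : Fin m, ∃ x x' : Fin n → ℝ,
      (∀ i, x i = 1 ∨ x i = -1) ∧ (∀ i, x' i = 1 ∨ x' i = -1) ∧ f j.succ x ≠ f j.succ x')
    (hpoly : ∀ z : Fin n → Fin m → ℝ, (∀ i j, z i j = 1 ∨ z i j = -1) →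
      f 0 (fun i => g i.succ (z i)) = g 0 (fun j => f j.succ (fun i => z i j)))
    (S : Finset (Fin n))
    (hSmax : fc 0 S ≠ 0 ∧ ∀ S' : Finset (Fin n), fc 0 S' ≠ 0 → S ⊆ S' → S = S')
    (U : Fin n → Finset (Fin m))
    (hUmax : ∀ i ∈ S, gc i.succ (U i) ≠ 0 ∧
      ∀ T : Finset (Fin m), gc i.succ T ≠ 0 → U i ⊆ T → U i = T) :
    (gc 0 (S.biUnion U) ≠ 0 ∧
      ∀ T' : Finset (Fin m), gc 0 T' ≠ 0 → S.biUnion U ⊆ T' → S.biUnion U = T') ∧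
    ∀ j ∈ S.biUnion U,
      fc j.succ (S.filter (fun i => j ∈ U i)) ≠ 0 ∧
      ∀ V : Finset (Fin n), fc j.succ V ≠ 0 →
        S.filter (fun i => j ∈ U i) ⊆ V → S.filter (fun i => j ∈ U i) = V := by
  have hU : ∀ i ∈ S, (U i).Nonempty := fun i hi =>
    nonempty_iff_ne_empty.2 fun h => (hUmax i hi).1 (h ▸ hbalg i)
  set R : Fin n → Finset (Fin m) := fun i => if i ∈ S then U i else ∅
  have hdom : relDom R = S := by
    ext i
    by_cases hi : i ∈ S <;> simp [mem_relDom, R, hi, hU]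
  have hRT : relTranspose R = fun j => S.filter (fun i => j ∈ U i) := by
    ext j i
    by_cases hi : i ∈ S <;> simp [mem_relTranspose, R, hi]
  have hdomT : relDom (relTranspose R) = S.biUnion U := by
    ext j
    simp [hRT, mem_relDom, filter_nonempty_iff]
  have hmax : Maximal (compCoeff (fc 0) (fun i => gc i.succ) · ≠ 0) R :=
    maximal_compCoeff (hdom ▸ maximal_iff.2 hSmax) fun i hi => by
      rw [hdom] at hi
      simpa [R, hi] using maximal_iff.2 (hUmax i hi)
  have hmaxT : Maximal (compCoeff (gc 0) (fun j => fc j.succ) · ≠ 0) (relTranspose R) := by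
    rw [relTranspose.maximal_apply_iff]
    simpa only [compCoeff_eq_compCoeff_relTranspose (hfexp 0) (fun i => hgexp i.succ) (hgexp 0)
      (fun j => hfexp j.succ) hbalg hbalf hpoly] using hmax
  have hT := hmaxT.relDom_of_compCoeff fun j => by
    obtain ⟨x, x', -, -, hxx'⟩ := hncf j
    exact exists_nonempty_coeff_ne_zero (hfexp j.succ) hxx'
  rw [hdomT] at hT
  refine ⟨maximal_iff.1 hT, fun j hj => ?_⟩
  have hV := hmaxT.row_of_compCoeff (hdomT ▸ hj)
  rw [hRT] at hV
  exact maximal_iff.1 hV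

/-- Inclusion-maximality is preserved by support propagation:
if `S` is inclusion-maximal in `supp f̂₀` and each `Uᵢ` is inclusion-maximal in
`supp ĝᵢ`, then `T = ⋃_{i∈S} Uᵢ` is inclusion-maximal in `supp ĝ₀` and each
`Vⱼ = {i ∈ S : j ∈ Uᵢ}` is inclusion-maximal in `supp f̂ⱼ`. -/
theorem stmt_8 (n m : ℕ)
    (f : Fin (m + 1) → (Fin n → ℝ) → ℝ) (g : Fin (n + 1) → (Fin m → ℝ) → ℝ)
    (fc : Fin (m + 1) → Finset (Fin n) → ℝ) (gc : Fin (n + 1) → Finset (Fin m) → ℝ)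
    (hfexp : ∀ (j : Fin (m + 1)) (x : Fin n → ℝ),
      f j x = ∑ S : Finset (Fin n), fc j S * ∏ i ∈ S, x i)
    (hgexp : ∀ (i : Fin (n + 1)) (y : Fin m → ℝ),
      g i y = ∑ T : Finset (Fin m), gc i T * ∏ j ∈ T, y j)
    (hbalf : ∀ j : Fin m, fc j.succ ∅ = 0)
    (hbalg : ∀ i : Fin n, gc i.succ ∅ = 0)
    (hncf : ∀ j : Fin m, ∃ x x' : Fin n → ℝ,
      (∀ i, x i = 1 ∨ x i = -1) ∧ (∀ i, x' i = 1 ∨ x' i = -1) ∧ f j.succ x ≠ f j.succ x')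
    (hncg : ∀ i : Fin n, ∃ y y' : Fin m → ℝ,
      (∀ j, y j = 1 ∨ y j = -1) ∧ (∀ j, y' j = 1 ∨ y' j = -1) ∧ g i.succ y ≠ g i.succ y')
    (hpoly : ∀ z : Fin n → Fin m → ℝ, (∀ i j, z i j = 1 ∨ z i j = -1) →
      f 0 (fun i => g i.succ (z i)) = g 0 (fun j => f j.succ (fun i => z i j)))
    (S : Finset (Fin n))
    (hSmax : fc 0 S ≠ 0 ∧ ∀ S' : Finset (Fin n), fc 0 S' ≠ 0 → S ⊆ S' → S = S')
    (U : Fin n → Finset (Fin m))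
    (hUmax : ∀ i ∈ S, gc i.succ (U i) ≠ 0 ∧
      ∀ T : Finset (Fin m), gc i.succ T ≠ 0 → U i ⊆ T → U i = T) :
    (gc 0 (S.biUnion U) ≠ 0 ∧
      ∀ T' : Finset (Fin m), gc 0 T' ≠ 0 → S.biUnion U ⊆ T' → S.biUnion U = T') ∧
    ∀ j ∈ S.biUnion U,
      fc j.succ (S.filter (fun i => j ∈ U i)) ≠ 0 ∧
      ∀ V : Finset (Fin n), fc j.succ V ≠ 0 →
        S.filter (fun i => j ∈ U i) ⊆ V → S.filter (fun i => j ∈ U i) = V :=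
  stmt_8_general n m f g fc gc hfexp hgexp hbalf hbalg hncf hpoly S hSmax U hUmax
end

section
/- Let f_0,…,f_m : {-1,1}^n → ℝ and g_0,…,g_n : {-1,1}^m → ℝ with g_1,…,g_n, f_1,…,f_m nonconstant, satisfying the generalized polymorphism identity. Let Z_0 ⊆ [n]×[m] be the set of coordinates (i,j) on which the common function z ↦ f_0(g_1(z_{1·}),…,g_n(z_{n·})) depends. Then Z_0 = {(i,j) : i ∈ dep(f_0) and j ∈ dep(g_i)} = {(i,j) : j ∈ dep(g_0) and i ∈ dep(f_j)}. -/
open Finset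

/-- `x` lies on the Boolean cube `{-1,1}^ι`. -/
def IsCube {ι : Type*} (x : ι → ℝ) : Prop := ∀ i, x i = 1 ∨ x i = -1

/-- `f` depends on coordinate `w` (over the Boolean cube). -/
def CubeDependsOn {ι : Type*} [DecidableEq ι] (f : (ι → ℝ) → ℝ) (w : ι) : Prop :=
  ∃ x : ι → ℝ, IsCube x ∧ f (Function.update x w 1) ≠ f (Function.update x w (-1))

/-!
All functions involved are multi-affine (affine in each coordinate separately), so dependence on a
coordinate `w` is detected by the discrete derivative `cubeDeriv h w`, and a multi-affine function
that is nonzero somewhere on `ℝ^ι` is already nonzero somewhere on the cube. By the chain rule the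
derivative of `z ↦ f₀(g₁(z₁.), …, gₙ(zₙ.))` in `z_{ij}` is `∂ⱼgᵢ(zᵢ.) · ∂ᵢf₀(g(z))`. A nonconstant
multi-affine function is onto `ℝ`, so the rows `z_k.` with `k ≠ i` can be chosen to make `g(z)` any
prescribed point, which makes both factors nonzero at once. The polymorphism identity transfers the
argument to the transposed composition `g₀(f₁(z.₁), …, fₘ(z.ₘ))`.
-/

open Function

section Multiaffine

variable {ι κ : Type*} [DecidableEq ι] [DecidableEq κ]

def IsMultiaffine (h : (ι → ℝ) → ℝ) : Prop :=
  ∀ (w : ι) (x : ι → ℝ), ∃ a b : ℝ, ∀ t, h (update x w t) = a + t * b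

noncomputable def cubeDeriv (h : (ι → ℝ) → ℝ) (w : ι) (x : ι → ℝ) : ℝ :=
  (h (update x w 1) - h (update x w (-1))) / 2

def compRows (φ : (ι → ℝ) → ℝ) (γ : ι → (κ → ℝ) → ℝ) (w : ι × κ → ℝ) : ℝ :=
  φ fun k => γ k (curry w k)

lemma isCube_update {x : ι → ℝ} (hx : IsCube x) (w : ι) {t : ℝ} (ht : t = 1 ∨ t = -1) :
    IsCube (update x w t) := by
  intro k
  rcases eq_or_ne k w with rfl | hk
  · simpa using ht
  · simpa [hk] using hx k

lemma cubeDependsOn_iff_exists_cubeDeriv_ne_zero (h : (ι → ℝ) → ℝ) (w : ι) :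
    CubeDependsOn h w ↔ ∃ x, IsCube x ∧ cubeDeriv h w x ≠ 0 := by
  simp only [CubeDependsOn, cubeDeriv, ne_eq, div_eq_zero_iff, sub_eq_zero, two_ne_zero, or_false]

lemma cubeDependsOn_congr {h₁ h₂ : (ι → ℝ) → ℝ} (hc : ∀ x, IsCube x → h₁ x = h₂ x) (w : ι) :
    CubeDependsOn h₁ w ↔ CubeDependsOn h₂ w := by
  refine exists_congr fun x => and_congr_right fun hx => ?_
  rw [hc _ (isCube_update hx w (.inl rfl)), hc _ (isCube_update hx w (.inr rfl))]

lemma cubeDependsOn_comp_equiv (e : κ ≃ ι) (h : (κ → ℝ) → ℝ) (a : κ) :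
    CubeDependsOn (fun v => h (v ∘ e)) (e a) ↔ CubeDependsOn h a := by
  have key : ∀ (v : ι → ℝ) t, update v (e a) t ∘ e = update (v ∘ e) a t := fun v t => by
    rw [update_comp_equiv, e.symm_apply_apply]
  constructor
  · rintro ⟨v, hv, hne⟩
    exact ⟨v ∘ e, fun k => hv (e k), by simpa only [key] using hne⟩
  · rintro ⟨x, hx, hne⟩
    refine ⟨x ∘ e.symm, fun k => hx _, ?_⟩
    simpa only [key, comp_assoc, e.symm_comp_self, comp_id] using hne

lemma cubeDeriv_update_self (h : (ι → ℝ) → ℝ) (w : ι) (x : ι → ℝ) (t : ℝ) :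
    cubeDeriv h w (update x w t) = cubeDeriv h w x := by
  simp only [cubeDeriv, update_idem]

lemma apply_eq_apply_of_forall_apply_update [Fintype ι] {h : (ι → ℝ) → ℝ}
    (hh : ∀ w x t, h (update x w t) = h x) (y y' : ι → ℝ) : h y = h y' := by
  have key : ∀ s : Finset ι, h (s.piecewise y' y) = h y := by
    intro s
    induction s using Finset.induction_on with
    | empty => simp
    | insert w s _ ih => rw [Finset.piecewise_insert, hh, ih]
  simpa using (key Finset.univ).symm

lemma compRows_update (φ : (ι → ℝ) → ℝ) (γ : ι → (κ → ℝ) → ℝ) (w : ι × κ → ℝ) (i : ι) (j : κ)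
    (t : ℝ) :
    compRows φ γ (update w (i, j) t) =
      φ (update (fun k => γ k (curry w k)) i (γ i (update (curry w i) j t))) := by
  simp only [compRows, curry_update]
  congr 1
  funext k
  exact apply_update (fun k => γ k) (curry w) i _ k

lemma isMultiaffine_sum_monomials [Fintype ι] (c : Finset ι → ℝ) :
    IsMultiaffine fun x => ∑ S, c S * ∏ i ∈ S, x i := by
  intro w x
  refine ⟨∑ S, if w ∈ S then 0 else c S * ∏ i ∈ S, x i,
    ∑ S, if w ∈ S then c S * ∏ i ∈ S \ {w}, x i else 0, fun t => ?_⟩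
  rw [Finset.mul_sum, ← Finset.sum_add_distrib]
  refine Finset.sum_congr rfl fun S _ => ?_
  by_cases hw : w ∈ S
  · simp only [hw, if_true, Finset.prod_update_of_mem hw]
    ring
  · simp only [hw, if_false, Finset.prod_update_of_notMem hw]
    ring

namespace IsMultiaffine

variable {h φ : (ι → ℝ) → ℝ}

lemma apply_update (hh : IsMultiaffine h) (w : ι) (x : ι → ℝ) (t : ℝ) :
    h (update x w t) = h (update x w 0) + t * cubeDeriv h w x := by
  obtain ⟨a, b, hab⟩ := hh w x
  simp only [cubeDeriv, hab]
  ring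

protected lemma cubeDeriv (hh : IsMultiaffine h) (w : ι) : IsMultiaffine (cubeDeriv h w) := by
  intro v x
  rcases eq_or_ne v w with rfl | hvw
  · exact ⟨cubeDeriv h v x, 0, fun t => by rw [cubeDeriv_update_self]; ring⟩
  · obtain ⟨a₁, b₁, h₁⟩ := hh v (update x w 1)
    obtain ⟨a₂, b₂, h₂⟩ := hh v (update x w (-1))
    refine ⟨(a₁ - a₂) / 2, (b₁ - b₂) / 2, fun t => ?_⟩
    rw [cubeDeriv, update_comm (β := fun _ => ℝ) hvw t 1, update_comm (β := fun _ => ℝ) hvw t (-1),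
      h₁, h₂]
    ring

lemma exists_isCube_ne_zero [Fintype ι] (hh : IsMultiaffine h) {x : ι → ℝ} (hx : h x ≠ 0) :
    ∃ y, IsCube y ∧ h y ≠ 0 := by
  suffices key : ∀ s : Finset ι, ∃ y, (∀ k ∈ s, y k = 1 ∨ y k = -1) ∧ h y ≠ 0 by
    obtain ⟨y, hy, hne⟩ := key Finset.univ
    exact ⟨y, fun k => hy k (Finset.mem_univ k), hne⟩
  intro s
  induction s using Finset.induction_on with
  | empty => exact ⟨x, by simp, hx⟩
  | insert w s _ ih =>
    obtain ⟨y, hy, hne⟩ := ih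
    obtain ⟨a, b, hab⟩ := hh w y
    obtain ⟨t, ht, hne'⟩ : ∃ t : ℝ, (t = 1 ∨ t = -1) ∧ a + t * b ≠ 0 := by
      by_contra! hzero
      have ha : a = 0 := by linarith [hzero 1 (.inl rfl), hzero (-1) (.inr rfl)]
      have hb : b = 0 := by linarith [hzero 1 (.inl rfl), hzero (-1) (.inr rfl)]
      apply hne
      rw [← update_eq_self w y, hab, ha, hb]
      ring
    refine ⟨update y w t, fun k hk => ?_, by rwa [hab]⟩
    rcases eq_or_ne k w with rfl | hkw
    · simpa using ht
    · simpa [hkw] using hy k ((Finset.mem_insert.mp hk).resolve_left hkw)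

lemma surjective [Fintype ι] (hh : IsMultiaffine h) {y y' : ι → ℝ} (hne : h y ≠ h y') :
    Surjective h := by
  obtain ⟨w, x, hd⟩ : ∃ w x, cubeDeriv h w x ≠ 0 := by
    by_contra! hzero
    refine hne (apply_eq_apply_of_forall_apply_update (fun w x t => ?_) y y')
    conv_rhs => rw [← update_eq_self w x]
    rw [hh.apply_update w x t, hh.apply_update w x (x w), hzero, mul_zero, mul_zero]
  intro r
  refine ⟨update x w ((r - h (update x w 0)) / cubeDeriv h w x), ?_⟩
  rw [hh.apply_update w x, div_mul_cancel₀ _ hd]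
  ring

lemma compRows {γ : ι → (κ → ℝ) → ℝ} (hφ : IsMultiaffine φ) (hγ : ∀ k, IsMultiaffine (γ k)) :
    IsMultiaffine (compRows φ γ) := by
  rintro ⟨i, j⟩ w
  obtain ⟨a, b, hab⟩ := hγ i j (curry w i)
  refine ⟨φ (update (fun k => γ k (curry w k)) i 0) + a * cubeDeriv φ i (fun k => γ k (curry w k)),
    b * cubeDeriv φ i (fun k => γ k (curry w k)), fun t => ?_⟩
  rw [compRows_update, hφ.apply_update, hab]
  ring

lemma cubeDeriv_compRows (hφ : IsMultiaffine φ) (γ : ι → (κ → ℝ) → ℝ) (i : ι) (j : κ)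
    (w : ι × κ → ℝ) :
    cubeDeriv (_root_.compRows φ γ) (i, j) w =
      cubeDeriv (γ i) j (curry w i) * cubeDeriv φ i (fun k => γ k (curry w k)) := by
  simp only [cubeDeriv, compRows_update, hφ.apply_update i _ (γ i _)]
  ring

end IsMultiaffine

theorem cubeDependsOn_compRows_iff [Fintype ι] [Fintype κ] {φ : (ι → ℝ) → ℝ}
    {γ : ι → (κ → ℝ) → ℝ} (hφ : IsMultiaffine φ) (hγ : ∀ k, IsMultiaffine (γ k))
    (hnc : ∀ k, ∃ y y', γ k y ≠ γ k y') (i : ι) (j : κ) :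
    CubeDependsOn (compRows φ γ) (i, j) ↔ CubeDependsOn φ i ∧ CubeDependsOn (γ i) j := by
  simp only [cubeDependsOn_iff_exists_cubeDeriv_ne_zero]
  constructor
  · rintro ⟨w, hw, hne⟩
    rw [hφ.cubeDeriv_compRows, mul_ne_zero_iff] at hne
    exact ⟨(hφ.cubeDeriv i).exists_isCube_ne_zero hne.2, curry w i, fun l => hw (i, l), hne.1⟩
  · rintro ⟨⟨x, -, hx⟩, y, -, hy⟩
    choose y₀ y₀' hy₀ using hnc
    choose r hr using fun k => (hγ k).surjective (hy₀ k) (x k)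
    have hrows : (fun k => γ k (update r i y k)) = update x i (γ i y) := by
      funext k
      rcases eq_or_ne k i with rfl | hk
      · simp
      · simp [hk, hr]
    refine ((hφ.compRows hγ).cubeDeriv (i, j)).exists_isCube_ne_zero
      (x := uncurry (update r i y)) ?_
    rw [hφ.cubeDeriv_compRows, curry_uncurry, hrows, cubeDeriv_update_self, update_self]
    exact mul_ne_zero hy hx

end Multiaffine

/-- For a generalized polymorphism with nonconstant inner functions,
the set `Z₀` of coordinates `(i,j)` on which the common composed function depends
equals `{(i,j) : i ∈ dep(f₀), j ∈ dep(gᵢ)} = {(i,j) : j ∈ dep(g₀), i ∈ dep(fⱼ)}`. -/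
theorem stmt_9 (n m : ℕ)
    (f : Fin (m + 1) → (Fin n → ℝ) → ℝ) (g : Fin (n + 1) → (Fin m → ℝ) → ℝ)
    (fc : Fin (m + 1) → Finset (Fin n) → ℝ) (gc : Fin (n + 1) → Finset (Fin m) → ℝ)
    (hfexp : ∀ (j : Fin (m + 1)) (x : Fin n → ℝ),
      f j x = ∑ S : Finset (Fin n), fc j S * ∏ i ∈ S, x i)
    (hgexp : ∀ (i : Fin (n + 1)) (y : Fin m → ℝ),
      g i y = ∑ T : Finset (Fin m), gc i T * ∏ j ∈ T, y j)
    (hncf : ∀ j : Fin m, ∃ x x' : Fin n → ℝ, IsCube x ∧ IsCube x' ∧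
      f j.succ x ≠ f j.succ x')
    (hncg : ∀ i : Fin n, ∃ y y' : Fin m → ℝ, IsCube y ∧ IsCube y' ∧
      g i.succ y ≠ g i.succ y')
    (hpoly : ∀ z : Fin n → Fin m → ℝ, (∀ i j, z i j = 1 ∨ z i j = -1) →
      f 0 (fun i => g i.succ (z i)) = g 0 (fun j => f j.succ (fun i => z i j))) :
    ∀ p : Fin n × Fin m,
      (CubeDependsOn (fun w : Fin n × Fin m → ℝ =>
          f 0 (fun i => g i.succ (fun j => w (i, j)))) p ↔
        (CubeDependsOn (f 0) p.1 ∧ CubeDependsOn (g p.1.succ) p.2)) ∧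
      (CubeDependsOn (fun w : Fin n × Fin m → ℝ =>
          f 0 (fun i => g i.succ (fun j => w (i, j)))) p ↔
        (CubeDependsOn (g 0) p.2 ∧ CubeDependsOn (f p.2.succ) p.1)) := by
  have hf : ∀ j, IsMultiaffine (f j) := fun j => by
    rw [funext (hfexp j)]
    exact isMultiaffine_sum_monomials (fc j)
  have hg : ∀ i, IsMultiaffine (g i) := fun i => by
    rw [funext (hgexp i)]
    exact isMultiaffine_sum_monomials (gc i)
  have hncf' : ∀ j : Fin m, ∃ x x', f j.succ x ≠ f j.succ x' := fun j => by
    obtain ⟨x, x', -, -, hne⟩ := hncf j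
    exact ⟨x, x', hne⟩
  have hncg' : ∀ i : Fin n, ∃ y y', g i.succ y ≠ g i.succ y' := fun i => by
    obtain ⟨y, y', -, -, hne⟩ := hncg i
    exact ⟨y, y', hne⟩
  rintro ⟨i, j⟩
  refine ⟨cubeDependsOn_compRows_iff (hf 0) (fun k => hg k.succ) hncg' i j, ?_⟩
  refine (cubeDependsOn_congr (fun w hw => hpoly _ fun k l => hw (k, l)) (i, j)).trans ?_
  exact (cubeDependsOn_comp_equiv (Equiv.prodComm (Fin m) (Fin n)) _ (j, i)).trans
    (cubeDependsOn_compRows_iff (hg 0) (fun l => hf l.succ) hncf' j i)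
end

section
/- Let I_1,…,I_k be a partition of [n], J_1,…,J_k a partition of [m], and for each ℓ ∈ [k] a subset Z_ℓ ⊆ I_ℓ × J_ℓ. Fix real constants κ_{ij} for (i,j) ∈ ∪_ℓ Z_ℓ, nonzero constants A_j, C_i, constants B_j, D_i, K_ℓ, L_ℓ, and an arbitrary function h : ℝ^k → ℝ. Define g_i(y) = C_i·∏_{j:(i,j)∈Z_ℓ} (y_j + κ_{ij}) − D_i for i ∈ I_ℓ, f_j(x) = A_j·∏_{i:(i,j)∈Z_ℓ} (x_i + κ_{ij}) − B_j for j ∈ J_ℓ, f_0^{(ℓ)}(x) = K_ℓ·∏_{i∈I_ℓ} ((x_i + D_i)/C_i) − L_ℓ, g_0^{(ℓ)}(y) = K_ℓ·∏_{j∈J_ℓ} ((y_j + B_j)/A_j) − L_ℓ, f_0 = h∘(f_0^{(1)},…,f_0^{(k)}), g_0 = h∘(g_0^{(1)},…,g_0^{(k)}). Then f_0(g_1(z_{1·}),…,g_n(z_{n·})) = g_0(f_1(z_{·1}),…,f_m(z_{·m})), both sides being equal to h(K_1·∏_{(i,j)∈Z_1}(z_{ij}+κ_{ij}) − L_1, …,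 K_k·∏_{(i,j)∈Z_k}(z_{ij}+κ_{ij}) − L_k). -/
open Finset

/-! Substituting `g_i(z_{i·})` into `f₀` undoes the affine map `u ↦ C_i u − D_i`, so the `ℓ`-th
argument of `h` becomes the product of `z_{ij} + κ_{ij}` over the rows of `Z_ℓ`, i.e. over `Z_ℓ`
itself; symmetrically, substituting `f_j(z_{·j})` into `g₀` gives the product over the columns of
`Z_ℓ`, which is again the product over `Z_ℓ`. -/

section ProdRowsCols

variable {α β M : Type*} [CommMonoid M] [DecidableEq α] [DecidableEq β]

theorem prod_prod_filter_fst_eq_prod [Fintype β] {s : Finset α} {Z : Finset (α × β)}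
    (hZ : ∀ p ∈ Z, p.1 ∈ s) (F : α → β → M) :
    ∏ i ∈ s, ∏ j ∈ univ.filter (fun j => (i, j) ∈ Z), F i j = ∏ p ∈ Z, F p.1 p.2 :=
  (prod_finset_product' Z s _ fun p => ⟨fun hp => ⟨hZ p hp, by simpa using hp⟩,
    fun ⟨_, hp⟩ => by simpa using hp⟩).symm

theorem prod_prod_filter_snd_eq_prod [Fintype α] {t : Finset β} {Z : Finset (α × β)}
    (hZ : ∀ p ∈ Z, p.2 ∈ t) (F : α → β → M) :
    ∏ j ∈ t, ∏ i ∈ univ.filter (fun i => (i, j) ∈ Z), F i j = ∏ p ∈ Z, F p.1 p.2 :=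
  (prod_finset_product_right' Z t _ fun p => ⟨fun hp => ⟨hZ p hp, by simpa using hp⟩,
    fun ⟨_, hp⟩ => by simpa using hp⟩).symm

end ProdRowsCols

theorem mul_sub_add_div_cancel_left {𝕜 : Type*} [Field 𝕜] {c d x : 𝕜} (hc : c ≠ 0) :
    (c * x - d + d) / c = x := by
  rw [sub_add_cancel, mul_div_cancel_left₀ _ hc]

theorem stmt_11_general (n m k : ℕ)
    (I : Fin k → Finset (Fin n)) (J : Fin k → Finset (Fin m))
    (Z : Fin k → Finset (Fin n × Fin m))
    (hZ : ∀ ℓ, Z ℓ ⊆ I ℓ ×ˢ J ℓ)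
    (κ : Fin n → Fin m → ℝ)
    (A B : Fin m → ℝ) (C D : Fin n → ℝ) (K L : Fin k → ℝ)
    (hA : ∀ j, A j ≠ 0) (hC : ∀ i, C i ≠ 0)
    (h : (Fin k → ℝ) → ℝ)
    (g : Fin n → (Fin m → ℝ) → ℝ) (f : Fin m → (Fin n → ℝ) → ℝ)
    (f0 : (Fin n → ℝ) → ℝ) (g0 : (Fin m → ℝ) → ℝ)
    (hg : ∀ ℓ : Fin k, ∀ i ∈ I ℓ, ∀ y : Fin m → ℝ,
      g i y = C i * ∏ j ∈ univ.filter (fun j => (i, j) ∈ Z ℓ), (y j + κ i j) - D i)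
    (hf : ∀ ℓ : Fin k, ∀ j ∈ J ℓ, ∀ x : Fin n → ℝ,
      f j x = A j * ∏ i ∈ univ.filter (fun i => (i, j) ∈ Z ℓ), (x i + κ i j) - B j)
    (hf0 : ∀ x : Fin n → ℝ,
      f0 x = h (fun ℓ => K ℓ * ∏ i ∈ I ℓ, ((x i + D i) / C i) - L ℓ))
    (hg0 : ∀ y : Fin m → ℝ,
      g0 y = h (fun ℓ => K ℓ * ∏ j ∈ J ℓ, ((y j + B j) / A j) - L ℓ)) :
    ∀ z : Fin n → Fin m → ℝ,
      f0 (fun i => g i (z i)) = g0 (fun j => f j (fun i => z i j)) ∧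
      f0 (fun i => g i (z i)) =
        h (fun ℓ => K ℓ * ∏ p ∈ Z ℓ, (z p.1 p.2 + κ p.1 p.2) - L ℓ) := by
  intro z
  have rows (ℓ : Fin k) :
      ∏ i ∈ I ℓ, ((g i (z i) + D i) / C i) = ∏ p ∈ Z ℓ, (z p.1 p.2 + κ p.1 p.2) := by
    rw [← prod_prod_filter_fst_eq_prod (fun p hp => (mem_product.1 (hZ ℓ hp)).1)
      fun i j => z i j + κ i j]
    exact prod_congr rfl fun i hi => by rw [hg ℓ i hi, mul_sub_add_div_cancel_left (hC i)]
  have cols (ℓ : Fin k) :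
      ∏ j ∈ J ℓ, ((f j (fun i => z i j) + B j) / A j) = ∏ p ∈ Z ℓ, (z p.1 p.2 + κ p.1 p.2) := by
    rw [← prod_prod_filter_snd_eq_prod (fun p hp => (mem_product.1 (hZ ℓ hp)).2)
      fun i j => z i j + κ i j]
    exact prod_congr rfl fun j hj => by rw [hf ℓ j hj, mul_sub_add_div_cancel_left (hA j)]
  have lhs : f0 (fun i => g i (z i)) =
      h (fun ℓ => K ℓ * ∏ p ∈ Z ℓ, (z p.1 p.2 + κ p.1 p.2) - L ℓ) := by
    simp only [hf0, rows]
  have rhs : g0 (fun j => f j (fun i => z i j)) =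
      h (fun ℓ => K ℓ * ∏ p ∈ Z ℓ, (z p.1 p.2 + κ p.1 p.2) - L ℓ) := by
    simp only [hg0, cols]
  exact ⟨lhs.trans rhs.symm, lhs⟩

/-- The multiple-blocks parametric solution of the generalized
polymorphism equation: both compositions equal
`h(K₁·∏_{(i,j)∈Z₁}(z_{ij}+κ_{ij}) − L₁, …, K_k·∏_{(i,j)∈Z_k}(z_{ij}+κ_{ij}) − L_k)`. -/
theorem stmt_11 (n m k : ℕ)
    (I : Fin k → Finset (Fin n)) (J : Fin k → Finset (Fin m))
    (hIdisj : ∀ ℓ ℓ' : Fin k, ℓ ≠ ℓ' → Disjoint (I ℓ) (I ℓ'))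
    (hIcov : ∀ i : Fin n, ∃ ℓ, i ∈ I ℓ)
    (hJdisj : ∀ ℓ ℓ' : Fin k, ℓ ≠ ℓ' → Disjoint (J ℓ) (J ℓ'))
    (hJcov : ∀ j : Fin m, ∃ ℓ, j ∈ J ℓ)
    (Z : Fin k → Finset (Fin n × Fin m))
    (hZ : ∀ ℓ, Z ℓ ⊆ I ℓ ×ˢ J ℓ)
    (κ : Fin n → Fin m → ℝ)
    (A B : Fin m → ℝ) (C D : Fin n → ℝ) (K L : Fin k → ℝ)
    (hA : ∀ j, A j ≠ 0) (hC : ∀ i, C i ≠ 0)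
    (h : (Fin k → ℝ) → ℝ)
    (g : Fin n → (Fin m → ℝ) → ℝ) (f : Fin m → (Fin n → ℝ) → ℝ)
    (f0 : (Fin n → ℝ) → ℝ) (g0 : (Fin m → ℝ) → ℝ)
    (hg : ∀ ℓ : Fin k, ∀ i ∈ I ℓ, ∀ y : Fin m → ℝ,
      g i y = C i * ∏ j ∈ univ.filter (fun j => (i, j) ∈ Z ℓ), (y j + κ i j) - D i)
    (hf : ∀ ℓ : Fin k, ∀ j ∈ J ℓ, ∀ x : Fin n → ℝ,
      f j x = A j * ∏ i ∈ univ.filter (fun i => (i, j) ∈ Z ℓ), (x i + κ i j) - B j)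
    (hf0 : ∀ x : Fin n → ℝ,
      f0 x = h (fun ℓ => K ℓ * ∏ i ∈ I ℓ, ((x i + D i) / C i) - L ℓ))
    (hg0 : ∀ y : Fin m → ℝ,
      g0 y = h (fun ℓ => K ℓ * ∏ j ∈ J ℓ, ((y j + B j) / A j) - L ℓ)) :
    ∀ z : Fin n → Fin m → ℝ,
      f0 (fun i => g i (z i)) = g0 (fun j => f j (fun i => z i j)) ∧
      f0 (fun i => g i (z i)) =
        h (fun ℓ => K ℓ * ∏ p ∈ Z ℓ, (z p.1 p.2 + κ p.1 p.2) - L ℓ) :=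
  stmt_11_general n m k I J Z hZ κ A B C D K L hA hC h g f f0 g0 hg hf hf0 hg0
end

section
/- Let f : {-1,1}^n → ℝ be 2-valued-like with deg(f) ≥ 2, and let F be a shifted translation of f. Then F is also 2-valued-like. -/
open Finset

/-- The coefficient function `c` (of a multilinear polynomial) is that of a dictator:
a nonconstant function depending on a single coordinate. -/
def IsDictatorCoeff {n : ℕ} (c : Finset (Fin n) → ℝ) : Prop :=
  ∃ w : Fin n, c {w} ≠ 0 ∧ ∀ S : Finset (Fin n), c S ≠ 0 → S ⊆ {w}

/-- The multilinear polynomial with coefficients `c` has degree exactly 1. -/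
def HasDegreeOne {n : ℕ} (c : Finset (Fin n) → ℝ) : Prop :=
  (∀ S : Finset (Fin n), c S ≠ 0 → S.card ≤ 1) ∧ ∃ S : Finset (Fin n), c S ≠ 0 ∧ S.card = 1

/-- `c` is the coefficient function of a 2-valued-like function: its degree is 1 iff it
is a dictator, and if it is not a dictator then every relevant coordinate lies in some
support set of size at least 2. -/
def TwoValuedLike {n : ℕ} (c : Finset (Fin n) → ℝ) : Prop :=
  (HasDegreeOne c ↔ IsDictatorCoeff c) ∧
  (¬ IsDictatorCoeff c → ∀ w : Fin n, (∃ S, c S ≠ 0 ∧ w ∈ S) →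
    ∃ S : Finset (Fin n), c S ≠ 0 ∧ 2 ≤ S.card ∧ w ∈ S)

/-!
Expanding `∏_{i ∈ T} (x_i + κ_i)` shows that the coefficient of `x^S` in the shifted
translation is `∑_{T ⊇ S} c_T κ^{T \ S}` (plus `κ₀` when `S = ∅`). For a nonempty support set
`T` of `c` that is maximal under inclusion only the term `T` survives, so `T` is also a
support set of the translation; conversely every nonempty support set of the translation lies
inside a support set of `c`. Hence a coordinate relevant to the translation is relevant to `c`,
lies in a support set of `c` of size at least 2 because `c` is 2-valued-like and not a
dictator, and a maximal support set of `c` above that one witnesses the claim for the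
translation. Since the translation has a support set of size at least 2, it is neither of
degree one nor a dictator.
-/

section Multilinear

variable {ι R : Type*} [Fintype ι] [DecidableEq ι] [CommRing R]

theorem multilinear_coeff_eq_zero_of_forall_eval_eq_zero {e : Finset ι → R}
    (h : ∀ x : ι → R, ∑ S, e S * ∏ i ∈ S, x i = 0) (S : Finset ι) : e S = 0 := by
  induction S using Finset.strongInduction with
  | H S ih =>
    have hS := h fun i => if i ∈ S then 1 else 0
    simp only [prod_boole, mul_ite, mul_one, mul_zero, ← sum_filter] at hS
    rwa [sum_eq_single_of_mem S (by simp) fun T hT hTS =>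
      ih T (ssubset_of_subset_of_ne (by simpa [subset_iff] using hT) hTS)] at hS

theorem multilinear_coeff_eq_of_forall_eval_eq {c d : Finset ι → R}
    (h : ∀ x : ι → R, ∑ S, c S * ∏ i ∈ S, x i = ∑ S, d S * ∏ i ∈ S, x i) : c = d := by
  funext S
  refine sub_eq_zero.mp (multilinear_coeff_eq_zero_of_forall_eval_eq_zero (e := c - d) (fun x => ?_) S)
  simp only [Pi.sub_apply, sub_mul, sum_sub_distrib, h x, sub_self]

def translateCoeff (c : Finset ι → R) (κ : ι → R) (κ₀ : R) (S : Finset ι) : R :=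
  ∑ T with S ⊆ T, c T * ∏ i ∈ T \ S, κ i + if S = ∅ then κ₀ else 0

theorem sum_translateCoeff_mul_prod (c : Finset ι → R) (κ x : ι → R) (κ₀ : R) :
    ∑ S, translateCoeff c κ κ₀ S * ∏ i ∈ S, x i =
      ∑ S, c S * ∏ i ∈ S, (x i + κ i) + κ₀ := by
  have hexpand : ∑ T, c T * ∏ i ∈ T, (x i + κ i) =
      ∑ S, (∑ T with S ⊆ T, c T * ∏ i ∈ T \ S, κ i) * ∏ i ∈ S, x i := by
    simp only [prod_add, mul_sum, sum_mul]
    rw [sum_comm' (t' := univ) (s' := fun S => {T | S ⊆ T}) fun T S => by simp]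
    exact sum_congr rfl fun S _ => sum_congr rfl fun T _ => by ring
  simp only [translateCoeff, add_mul, sum_add_distrib, hexpand, ite_mul, zero_mul,
    sum_ite_eq', mem_univ, if_true, prod_empty, mul_one]

variable {c : Finset ι → R} {κ : ι → R} {κ₀ : R}

theorem translateCoeff_eq_of_maximal {S : Finset ι} (hS : Maximal (fun T => c T ≠ 0) S)
    (hne : S.Nonempty) : translateCoeff c κ κ₀ S = c S := by
  rw [translateCoeff, if_neg hne.ne_empty, add_zero, sum_eq_single_of_mem S (by simp)]
  · simp
  · intro T hT hTS
    have hST : S ⊆ T := by simpa using hT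
    rw [not_ne_iff.mp fun hT => hTS (hS.eq_of_le hT hST).symm, zero_mul]

theorem exists_superset_translateCoeff_ne_zero {T : Finset ι} (hT : c T ≠ 0)
    (hne : T.Nonempty) : ∃ T₀, T ⊆ T₀ ∧ translateCoeff c κ κ₀ T₀ ≠ 0 := by
  obtain ⟨T₀, hTT₀, hT₀⟩ :=
    Set.Finite.exists_le_maximal (s := {T | c T ≠ 0}) (Set.toFinite _) hT
  exact ⟨T₀, hTT₀, (translateCoeff_eq_of_maximal hT₀ (hne.mono hTT₀)).symm ▸ hT₀.prop⟩

theorem exists_superset_ne_zero_of_translateCoeff_ne_zero {S : Finset ι}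
    (h : translateCoeff c κ κ₀ S ≠ 0) (hne : S.Nonempty) : ∃ T, S ⊆ T ∧ c T ≠ 0 := by
  rw [translateCoeff, if_neg hne.ne_empty, add_zero] at h
  obtain ⟨T, hT, hcT⟩ := exists_ne_zero_of_sum_ne_zero h
  exact ⟨T, by simpa using hT, left_ne_zero_of_mul hcT⟩

end Multilinear

section TwoValuedLike

variable {n : ℕ} {c : Finset (Fin n) → ℝ}

theorem not_hasDegreeOne_of_card {S : Finset (Fin n)} (hS : c S ≠ 0) (h2 : 2 ≤ S.card) :
    ¬ HasDegreeOne c :=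
  fun h => by have := h.1 S hS; omega

theorem not_isDictatorCoeff_of_card {S : Finset (Fin n)} (hS : c S ≠ 0) (h2 : 2 ≤ S.card) :
    ¬ IsDictatorCoeff c := by
  rintro ⟨w, -, hw⟩
  have := card_le_card (hw S hS)
  simp only [card_singleton] at this
  omega

theorem TwoValuedLike.of_card {S : Finset (Fin n)} (hS : c S ≠ 0) (h2 : 2 ≤ S.card)
    (h : ∀ w : Fin n, (∃ S, c S ≠ 0 ∧ w ∈ S) →
      ∃ S : Finset (Fin n), c S ≠ 0 ∧ 2 ≤ S.card ∧ w ∈ S) :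
    TwoValuedLike c :=
  ⟨iff_of_false (not_hasDegreeOne_of_card hS h2) (not_isDictatorCoeff_of_card hS h2),
    fun _ => h⟩

end TwoValuedLike

/-- If `f` (with coefficients `c`) is 2-valued-like of degree ≥ 2 and
`F` (with coefficients `C`) is a shifted translation of `f`, then `F` is 2-valued-like. -/
theorem stmt_12 (n : ℕ) (c C : Finset (Fin n) → ℝ) (κ : Fin n → ℝ) (κ₀ : ℝ)
    (hshift : ∀ x : Fin n → ℝ,
      (∑ S : Finset (Fin n), C S * ∏ i ∈ S, x i) =
        (∑ S : Finset (Fin n), c S * ∏ i ∈ S, (x i + κ i)) + κ₀)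
    (h2v : TwoValuedLike c)
    (hdeg : ∃ S : Finset (Fin n), c S ≠ 0 ∧ 2 ≤ S.card) :
    TwoValuedLike C := by
  obtain rfl : C = translateCoeff c κ κ₀ := multilinear_coeff_eq_of_forall_eval_eq fun x => by
    rw [hshift, sum_translateCoeff_mul_prod]
  obtain ⟨S, hS, hS2⟩ := hdeg
  have hc : ¬ IsDictatorCoeff c := not_isDictatorCoeff_of_card hS hS2
  obtain ⟨T, hST, hT⟩ := exists_superset_translateCoeff_ne_zero (κ := κ) (κ₀ := κ₀) hS
    (card_pos.mp (by omega))
  refine TwoValuedLike.of_card hT (hS2.trans (card_le_card hST)) ?_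
  rintro w ⟨S', hS', hwS'⟩
  obtain ⟨T', hS'T', hT'⟩ := exists_superset_ne_zero_of_translateCoeff_ne_zero hS' ⟨w, hwS'⟩
  obtain ⟨U, hU, hU2, hwU⟩ := h2v.2 hc w ⟨T', hT', hS'T' hwS'⟩
  obtain ⟨U₀, hUU₀, hU₀⟩ := exists_superset_translateCoeff_ne_zero (κ := κ) (κ₀ := κ₀) hU ⟨w, hwU⟩
  exact ⟨U₀, hU₀, hU2.trans (card_le_card hUU₀), hUU₀ hwU⟩
end

section
/- Let Z ⊆ I × J with I = [n], J = [m], such that every row and every column of Z is nonempty. Let I^{≥2} (resp. J^{≥2}) be the rows (columns) containing at least two elements of Z, and I^{=1}, J^{=1} the rows (columns) containing exactly one element. Assume Z ∩ (I^{=1} × J^{=1}) = ∅ (no isolated elements). For i ∈ I^{≥2} let P_i = {j : (i,j) is the unique element of Z in column j}, and for j ∈ J^{≥2} let Q_j = {i : (i,j) is the unique element of Z in row i}, and let Z^{≥2} = Z ∩ (I^{≥2} × J^{≥2}). Given arbitrary functions p_i : {-1,1}^{P_i} → {-1,1} and q_j : {-1,1}^{Q_j} → {-1,1}, define: g_i(y)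 = ∏_{j:(i,j)∈Z^{≥2}} y_j · p_i(y|_{P_i}) for i ∈ I^{≥2}; g_i(y) = y_j for i ∈ I^{=1} with i ∈ Q_j; f_j(x) = ∏_{i:(i,j)∈Z^{≥2}} x_i · q_j(x|_{Q_j}) for j ∈ J^{≥2}; f_j(x) = x_i for j ∈ J^{=1} with j ∈ P_i; f_0(x) = ∏_{i∈I^{≥2}} x_i · ∏_{j∈J^{≥2}} q_j(x|_{Q_j}); g_0(y) = ∏_{j∈J^{≥2}} y_j · ∏_{i∈I^{≥2}} p_i(y|_{P_i}). Then f_0(g_1(z_{1·}),…,g_n(z_{n·})) = g_0(f_1(z_{·1}),…,f_m(z_{·m})) for all z ∈ {-1,1}^{n×m}, both sides equaling ∏_{(i,j)∈Z^{≥2}} z_{ij} · ∏_{i∈I^{≥2}} p_i(z|_{i,P_i}) · ∏_{j∈J^{≥2}} q_j(z|_{Q_j,j}). -/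
/-!
Both sides are the same product, grouped once by rows and once by columns. On the left, the
`g_i` with `i ∈ I^{≥2}` contribute the row monomials of `Z^{≥2}` and the factors `p_i`, while a
row `i ∈ Q_j` with a single element of `Z` makes `g_i` the projection to column `j`, so that
`q_j` is evaluated at `z|_{Q_j,j}`. The right side is symmetric, with columns in place of rows.
-/

open Finset

/-- Number of elements of `Z` in row `i`. -/
def rowCount {n m : ℕ} (Z : Finset (Fin n × Fin m)) (i : Fin n) : ℕ :=
  (Z.filter (fun q => q.1 = i)).card

/-- Number of elements of `Z` in column `j`. -/
def colCount {n m : ℕ} (Z : Finset (Fin n × Fin m)) (j : Fin m) : ℕ :=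
  (Z.filter (fun q => q.2 = j)).card

/-- `P_i`: the columns `j` such that `(i,j)` is the unique element of `Z` in column `j`. -/
def Pset {n m : ℕ} (Z : Finset (Fin n × Fin m)) (i : Fin n) : Finset (Fin m) :=
  univ.filter (fun j => (i, j) ∈ Z ∧ colCount Z j = 1)

/-- `Q_j`: the rows `i` such that `(i,j)` is the unique element of `Z` in row `i`. -/
def Qset {n m : ℕ} (Z : Finset (Fin n × Fin m)) (j : Fin m) : Finset (Fin n) :=
  univ.filter (fun i => (i, j) ∈ Z ∧ rowCount Z i = 1)

/-- Rows of `Z` containing at least two elements. -/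
def Ige2 {n m : ℕ} (Z : Finset (Fin n × Fin m)) : Finset (Fin n) :=
  univ.filter (fun i => 2 ≤ rowCount Z i)

/-- Columns of `Z` containing at least two elements. -/
def Jge2 {n m : ℕ} (Z : Finset (Fin n × Fin m)) : Finset (Fin m) :=
  univ.filter (fun j => 2 ≤ colCount Z j)

/-- `Z^{≥2} = Z ∩ (I^{≥2} × J^{≥2})`. -/
def Zge2 {n m : ℕ} (Z : Finset (Fin n × Fin m)) : Finset (Fin n × Fin m) :=
  Z.filter (fun p => 2 ≤ rowCount Z p.1 ∧ 2 ≤ colCount Z p.2)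

section Regrouping

variable {M : Type*} [CommMonoid M] {n m : ℕ} (Z : Finset (Fin n × Fin m))

theorem prod_Zge2_eq_prod_Ige2 (F : Fin n → Fin m → M) :
    ∏ pr ∈ Zge2 Z, F pr.1 pr.2 =
      ∏ i ∈ Ige2 Z, ∏ j ∈ univ.filter (fun j => (i, j) ∈ Zge2 Z), F i j := by
  refine prod_finset_product' _ _ _ fun pr => ?_
  simp only [Ige2, Zge2, mem_filter, mem_univ, true_and]
  tauto

theorem prod_Zge2_eq_prod_Jge2 (F : Fin n → Fin m → M) :
    ∏ pr ∈ Zge2 Z, F pr.1 pr.2 =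
      ∏ j ∈ Jge2 Z, ∏ i ∈ univ.filter (fun i => (i, j) ∈ Zge2 Z), F i j := by
  refine prod_finset_product_right' _ _ _ fun pr => ?_
  simp only [Jge2, Zge2, mem_filter, mem_univ, true_and]
  tauto

end Regrouping

section Composition

variable {M : Type*} [CommMonoid M] {n m : ℕ} {Z : Finset (Fin n × Fin m)}
  {p : (i : Fin n) → ({j // j ∈ Pset Z i} → M) → M}
  {q : (j : Fin m) → ({i // i ∈ Qset Z j} → M) → M}

theorem f0_comp_rows_eq {g : Fin n → (Fin m → M) → M} {f0 : (Fin n → M) → M}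
    (hg2 : ∀ i : Fin n, 2 ≤ rowCount Z i → ∀ y : Fin m → M,
      g i y = (∏ j ∈ univ.filter (fun j => (i, j) ∈ Zge2 Z), y j) * p i (fun j => y j.val))
    (hg1 : ∀ i : Fin n, rowCount Z i = 1 → ∀ j : Fin m, (i, j) ∈ Z →
      ∀ y : Fin m → M, g i y = y j)
    (hf0 : ∀ x : Fin n → M,
      f0 x = (∏ i ∈ Ige2 Z, x i) * ∏ j ∈ Jge2 Z, q j (fun i => x i.val))
    (z : Fin n → Fin m → M) :
    f0 (fun i => g i (z i)) =
      (∏ pr ∈ Zge2 Z, z pr.1 pr.2) * (∏ i ∈ Ige2 Z, p i (fun j => z i j.val)) *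
        ∏ j ∈ Jge2 Z, q j (fun i => z i.val j) := by
  have hrows : ∀ i ∈ Ige2 Z, g i (z i) =
      (∏ j ∈ univ.filter (fun j => (i, j) ∈ Zge2 Z), z i j) * p i (fun j => z i j.val) :=
    fun i hi => hg2 i (mem_filter.1 hi).2 (z i)
  have hproj : ∀ j ∈ Jge2 Z,
      q j (fun i => g i.val (z i.val)) = q j (fun i => z i.val j) := fun j _ => by
    congr 1
    funext ⟨i, hi⟩
    obtain ⟨hij, hrow⟩ := (mem_filter.1 hi).2
    exact hg1 i hrow j hij (z i)
  rw [hf0, prod_congr rfl hrows, prod_mul_distrib, prod_congr rfl hproj,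
    ← prod_Zge2_eq_prod_Ige2]

theorem g0_comp_cols_eq {f : Fin m → (Fin n → M) → M} {g0 : (Fin m → M) → M}
    (hf2 : ∀ j : Fin m, 2 ≤ colCount Z j → ∀ x : Fin n → M,
      f j x = (∏ i ∈ univ.filter (fun i => (i, j) ∈ Zge2 Z), x i) * q j (fun i => x i.val))
    (hf1 : ∀ j : Fin m, colCount Z j = 1 → ∀ i : Fin n, (i, j) ∈ Z →
      ∀ x : Fin n → M, f j x = x i)
    (hg0 : ∀ y : Fin m → M,
      g0 y = (∏ j ∈ Jge2 Z, y j) * ∏ i ∈ Ige2 Z, p i (fun j => y j.val))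
    (z : Fin n → Fin m → M) :
    g0 (fun j => f j (fun i => z i j)) =
      (∏ pr ∈ Zge2 Z, z pr.1 pr.2) * (∏ i ∈ Ige2 Z, p i (fun j => z i j.val)) *
        ∏ j ∈ Jge2 Z, q j (fun i => z i.val j) := by
  have hcols : ∀ j ∈ Jge2 Z, f j (fun i => z i j) =
      (∏ i ∈ univ.filter (fun i => (i, j) ∈ Zge2 Z), z i j) * q j (fun i => z i.val j) :=
    fun j hj => hf2 j (mem_filter.1 hj).2 (fun i => z i j)
  have hproj : ∀ i ∈ Ige2 Z,
      p i (fun j => f j.val (fun i' => z i' j.val)) = p i (fun j => z i j.val) := fun i _ => by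
    congr 1
    funext ⟨j, hj⟩
    obtain ⟨hij, hcol⟩ := (mem_filter.1 hj).2
    exact hf1 j hcol i hij (fun i' => z i' j)
  rw [hg0, prod_congr rfl hcols, prod_mul_distrib, prod_congr rfl hproj,
    ← prod_Zge2_eq_prod_Jge2, mul_right_comm]

end Composition

theorem stmt_17_general (n m : ℕ) (Z : Finset (Fin n × Fin m))
    (p : (i : Fin n) → ({j // j ∈ Pset Z i} → ℝ) → ℝ)
    (q : (j : Fin m) → ({i // i ∈ Qset Z j} → ℝ) → ℝ)
    (g : Fin n → (Fin m → ℝ) → ℝ) (f : Fin m → (Fin n → ℝ) → ℝ)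
    (f0 : (Fin n → ℝ) → ℝ) (g0 : (Fin m → ℝ) → ℝ)
    (hg2 : ∀ i : Fin n, 2 ≤ rowCount Z i → ∀ y : Fin m → ℝ,
      g i y = (∏ j ∈ univ.filter (fun j => (i, j) ∈ Zge2 Z), y j) *
        p i (fun j => y j.val))
    (hg1 : ∀ i : Fin n, rowCount Z i = 1 → ∀ j : Fin m, (i, j) ∈ Z →
      ∀ y : Fin m → ℝ, g i y = y j)
    (hf2 : ∀ j : Fin m, 2 ≤ colCount Z j → ∀ x : Fin n → ℝ,
      f j x = (∏ i ∈ univ.filter (fun i => (i, j) ∈ Zge2 Z), x i) *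
        q j (fun i => x i.val))
    (hf1 : ∀ j : Fin m, colCount Z j = 1 → ∀ i : Fin n, (i, j) ∈ Z →
      ∀ x : Fin n → ℝ, f j x = x i)
    (hf0 : ∀ x : Fin n → ℝ,
      f0 x = (∏ i ∈ Ige2 Z, x i) * ∏ j ∈ Jge2 Z, q j (fun i => x i.val))
    (hg0 : ∀ y : Fin m → ℝ,
      g0 y = (∏ j ∈ Jge2 Z, y j) * ∏ i ∈ Ige2 Z, p i (fun j => y j.val)) :
    ∀ z : Fin n → Fin m → ℝ, (∀ i j, z i j = 1 ∨ z i j = -1) →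
      f0 (fun i => g i (z i)) = g0 (fun j => f j (fun i => z i j)) ∧
      f0 (fun i => g i (z i)) =
        (∏ pr ∈ Zge2 Z, z pr.1 pr.2) *
          (∏ i ∈ Ige2 Z, p i (fun j => z i j.val)) *
          (∏ j ∈ Jge2 Z, q j (fun i => z i.val j)) := by
  intro z _
  have hleft := f0_comp_rows_eq hg2 hg1 hf0 z
  exact ⟨hleft.trans (g0_comp_cols_eq hf2 hf1 hg0 z).symm, hleft⟩

/-- The XOR-like single-block solution with projections: given `Z`
with no empty rows/columns and no isolated elements, and arbitrary Boolean functions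
`p_i`, `q_j`, the functions defined in the statement form a generalized polymorphism,
both sides equaling
`∏_{(i,j)∈Z^{≥2}} z_{ij} · ∏_{i∈I^{≥2}} p_i(z|_{i,P_i}) · ∏_{j∈J^{≥2}} q_j(z|_{Q_j,j})`. -/
theorem stmt_17 (n m : ℕ) (Z : Finset (Fin n × Fin m))
    (hrow : ∀ i : Fin n, ∃ j, (i, j) ∈ Z)
    (hcol : ∀ j : Fin m, ∃ i, (i, j) ∈ Z)
    (hiso : ∀ pr ∈ Z, ¬(rowCount Z pr.1 = 1 ∧ colCount Z pr.2 = 1))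
    (p : (i : Fin n) → ({j // j ∈ Pset Z i} → ℝ) → ℝ)
    (q : (j : Fin m) → ({i // i ∈ Qset Z j} → ℝ) → ℝ)
    (hpBool : ∀ (i : Fin n) (y : {j // j ∈ Pset Z i} → ℝ),
      (∀ j, y j = 1 ∨ y j = -1) → (p i y = 1 ∨ p i y = -1))
    (hqBool : ∀ (j : Fin m) (x : {i // i ∈ Qset Z j} → ℝ),
      (∀ i, x i = 1 ∨ x i = -1) → (q j x = 1 ∨ q j x = -1))
    (g : Fin n → (Fin m → ℝ) → ℝ) (f : Fin m → (Fin n → ℝ) → ℝ)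
    (f0 : (Fin n → ℝ) → ℝ) (g0 : (Fin m → ℝ) → ℝ)
    (hg2 : ∀ i : Fin n, 2 ≤ rowCount Z i → ∀ y : Fin m → ℝ,
      g i y = (∏ j ∈ univ.filter (fun j => (i, j) ∈ Zge2 Z), y j) *
        p i (fun j => y j.val))
    (hg1 : ∀ i : Fin n, rowCount Z i = 1 → ∀ j : Fin m, (i, j) ∈ Z →
      ∀ y : Fin m → ℝ, g i y = y j)
    (hf2 : ∀ j : Fin m, 2 ≤ colCount Z j → ∀ x : Fin n → ℝ,
      f j x = (∏ i ∈ univ.filter (fun i => (i, j) ∈ Zge2 Z), x i) *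
        q j (fun i => x i.val))
    (hf1 : ∀ j : Fin m, colCount Z j = 1 → ∀ i : Fin n, (i, j) ∈ Z →
      ∀ x : Fin n → ℝ, f j x = x i)
    (hf0 : ∀ x : Fin n → ℝ,
      f0 x = (∏ i ∈ Ige2 Z, x i) * ∏ j ∈ Jge2 Z, q j (fun i => x i.val))
    (hg0 : ∀ y : Fin m → ℝ,
      g0 y = (∏ j ∈ Jge2 Z, y j) * ∏ i ∈ Ige2 Z, p i (fun j => y j.val)) :
    ∀ z : Fin n → Fin m → ℝ, (∀ i j, z i j = 1 ∨ z i j = -1) →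
      f0 (fun i => g i (z i)) = g0 (fun j => f j (fun i => z i j)) ∧
      f0 (fun i => g i (z i)) =
        (∏ pr ∈ Zge2 Z, z pr.1 pr.2) *
          (∏ i ∈ Ige2 Z, p i (fun j => z i j.val)) *
          (∏ j ∈ Jge2 Z, q j (fun i => z i.val j)) :=
  stmt_17_general n m Z p q g f f0 g0 hg2 hg1 hf2 hf1 hf0 hg0
end
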